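/- arXiv:1605.07976 — 11 statements merged into one kernel-verified Lean document; each statement's English description precedes it below -/
import Mathlib

section
/- With the hypotheses of a Rokhlin system (bases T_0,…,T_m, heights r_0 ≤ … ≤ r_m, T_l^0 the relative interiors), the sets h^j(T_l^0) for 0 ≤ l ≤ m and 0 ≤ j ≤ r_l − 1 are pairwise disjoint. -/
/-- A statement about a Rokhlin system of towers for `(X, h, Y)`. -/
theorem stmt_4 {X : Type*} [MetricSpace X] [CompactSpace X] (h : X ≃ₜ X)
    (Y : Set X) (hYne : Y.Nonempty) (hYcomp : IsCompact Y)
    (hYrec : Y ⊆ closure (⋃ n : ℕ, ⋃ _ : 1 ≤ n, (⇑h)^[n] '' Y))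
    (m : ℕ) (T : Fin (m + 1) → Set X) (r : Fin (m + 1) → ℕ)
    (hTne : ∀ l, (T l).Nonempty) (hTcomp : ∀ l, IsCompact (T l))
    (hTY : ∀ l, T l ⊆ Y) (hcover : (⋃ l, T l) = Y)
    (hrpos : ∀ l, 1 ≤ r l) (hrmono : Monotone r)
    (hret : ∀ l, (⇑h)^[r l] '' T l ⊆ Y)
    (hfirst : ∀ l : Fin (m + 1), ∀ y ∈ T l \ ⋃ j, ⋃ _ : j < l, T j,
      ∀ n, 1 ≤ n → n < r l → (⇑h)^[n] y ∉ Y)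
    (hrealized : ∀ l, ∃ y ∈ Y, (⇑h)^[r l] y ∈ Y ∧
      ∀ n, 1 ≤ n → n < r l → (⇑h)^[n] y ∉ Y) :
    ∀ l l' : Fin (m + 1), ∀ j j' : ℕ, j < r l → j' < r l' → (l, j) ≠ (l', j') →
      Disjoint ((⇑h)^[j] '' (T l \ ⋃ i, ⋃ _ : i < l, T i))
        ((⇑h)^[j'] '' (T l' \ ⋃ i, ⋃ _ : i < l', T i)) := by
  have key : ∀ l l' : Fin (m + 1), ∀ j j' : ℕ, j ≤ j' → j < r l → j' < r l' →
      (l, j) ≠ (l', j') →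
      Disjoint ((⇑h)^[j] '' (T l \ ⋃ i, ⋃ _ : i < l, T i))
        ((⇑h)^[j'] '' (T l' \ ⋃ i, ⋃ _ : i < l', T i)) := by
    intro l l' j j' hle hj hj' hne
    rw [Set.disjoint_left]
    rintro x ⟨y, hy, rfl⟩ ⟨y', hy', hxy⟩
    obtain ⟨d, rfl⟩ := Nat.exists_eq_add_of_le hle
    have hinj : Function.Injective ((⇑h)^[j]) := h.injective.iterate j
    rw [Function.iterate_add_apply] at hxy
    have hdy : (⇑h)^[d] y' = y := hinj hxy
    rcases Nat.eq_zero_or_pos d with rfl | hd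
    · simp only [Function.iterate_zero, id] at hdy
      subst hdy
      have hll' : l ≠ l' := by
        intro hll; exact hne (by simp [hll])
      rcases lt_or_gt_of_ne hll' with hlt | hlt
      · exact hy'.2 (Set.mem_iUnion.2 ⟨l, Set.mem_iUnion.2 ⟨hlt, hy.1⟩⟩)
      · exact hy.2 (Set.mem_iUnion.2 ⟨l', Set.mem_iUnion.2 ⟨hlt, hy'.1⟩⟩)
    · have : (⇑h)^[d] y' ∉ Y :=
        hfirst l' y' hy' d hd (lt_of_le_of_lt (Nat.le_add_left d j) hj')
      exact this (hdy ▸ hTY l hy.1)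
  intro l l' j j' hj hj' hne
  rcases le_total j j' with hle | hle
  · exact key l l' j j' hle hj hj' hne
  · exact (key l' l j' j hle hj' hj (fun hp => hne (by
      injection hp with h1 h2; simp [h1, h2]))).symm
end

section
/- With the hypotheses of a Rokhlin system, ⋃_{n∈ℤ} hⁿ(Y) equals the disjoint union over l = 0,…,m and j = 0,…,r_l−1 of the sets h^j(T_l^0); in particular, with N = r_m, ⋃_{n∈ℤ} hⁿ(Y) = ⋃_{n=0}^{N−1} hⁿ(Y), which is compact. -/
/-!
Write `B l = T l \ ⋃ i < l, T i` for the bases of the towers. A point of `Y` climbs the tower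
of its base and is sent back to `Y` at the top, so every forward iterate of `Y` is `h^[j] z`
with `z ∈ B l` and `1 ≤ j ≤ r l`, and if it lies in `Y` then `j = r l` by first return. The
union of the compact sets `h^[j] '' T l`, `1 ≤ j ≤ r l`, is closed, so it also contains the
closure of the forward orbit, hence `Y`: every point of `Y` is the top `h^[r l] z` of a tower.
So the union of the floors `h^[j] '' B l`, `j < r l`, is mapped onto itself by `h`, and it is
the whole orbit of `Y`. Two floors meeting would give `z = h^[k] z'` with `0 < k < r l'`,
against first return.
-/

open Set Function

theorem disjointed_eq_diff_iUnion_lt {X ι : Type*} [Preorder ι] [LocallyFiniteOrderBot ι]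
    (T : ι → Set X) (l : ι) : disjointed T l = T l \ ⋃ i, ⋃ _ : i < l, T i := by
  simp [disjointed_apply, Finset.sup_set_eq_biUnion]

section Towers

variable {X ι : Type*} {f : X → X} {Y : Set X} {B : ι → Set X} {r : ι → ℕ}

theorem exists_iterate_eq_iterate_of_mapsTo (hcov : Y ⊆ ⋃ l, B l) (hrpos : ∀ l, 1 ≤ r l)
    (hret : ∀ l, MapsTo f^[r l] (B l) Y) {x : X} (hx : x ∈ Y) {n : ℕ} (hn : 1 ≤ n) :
    ∃ l, ∃ z ∈ B l, ∃ j, 1 ≤ j ∧ j ≤ r l ∧ f^[n] x = f^[j] z := by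
  induction n using Nat.strong_induction_on generalizing x with
  | _ n ih =>
  obtain ⟨l, hl⟩ := mem_iUnion.1 (hcov hx)
  rcases le_or_gt n (r l) with hle | hgt
  · exact ⟨l, x, hl, n, hn, hle, rfl⟩
  · obtain ⟨k, rfl⟩ : ∃ k, n = k + r l := ⟨n - r l, by omega⟩
    rw [iterate_add_apply]
    exact ih k (by have := hrpos l; omega) (hret l hl) (by omega)

theorem iterate_mem_iUnion_image_of_mem (hcov : Y ⊆ ⋃ l, B l) (hrpos : ∀ l, 1 ≤ r l)
    (hret : ∀ l, MapsTo f^[r l] (B l) Y)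
    (hfirst : ∀ l, ∀ y ∈ B l, ∀ n, 1 ≤ n → n < r l → f^[n] y ∉ Y) {x : X} (hx : x ∈ Y)
    {n : ℕ} (hn : 1 ≤ n) (hxn : f^[n] x ∈ Y) : f^[n] x ∈ ⋃ l, f^[r l] '' B l := by
  obtain ⟨l, z, hz, j, hj, hjr, hxz⟩ :=
    exists_iterate_eq_iterate_of_mapsTo hcov hrpos hret hx hn
  obtain rfl : j = r l :=
    hjr.eq_or_lt.resolve_right fun hlt => hfirst l z hz j hj hlt (hxz ▸ hxn)
  exact mem_iUnion.2 ⟨l, z, hz, hxz.symm⟩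

theorem subset_iUnion_image_of_subset_closure [TopologicalSpace X] [T2Space X] [Finite ι]
    (hcov : Y ⊆ ⋃ l, B l) (hrpos : ∀ l, 1 ≤ r l) (hret : ∀ l, MapsTo f^[r l] (B l) Y)
    (hfirst : ∀ l, ∀ y ∈ B l, ∀ n, 1 ≤ n → n < r l → f^[n] y ∉ Y) (hf : Continuous f)
    (hYrec : Y ⊆ closure (⋃ n : ℕ, ⋃ _ : 1 ≤ n, f^[n] '' Y)) {T : ι → Set X}
    (hT : ∀ l, IsCompact (T l)) (hTY : ∀ l, T l ⊆ Y) (hBT : ∀ l, B l ⊆ T l) :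
    Y ⊆ ⋃ l, f^[r l] '' B l := by
  have hclosed : IsClosed (⋃ l, ⋃ j ∈ Icc 1 (r l), f^[j] '' T l) :=
    isClosed_iUnion_of_finite fun l => (finite_Icc 1 (r l)).isClosed_biUnion
      fun j _ => ((hT l).image (hf.iterate j)).isClosed
  have horbit :
      (⋃ n : ℕ, ⋃ _ : 1 ≤ n, f^[n] '' Y) ⊆ ⋃ l, ⋃ j ∈ Icc 1 (r l), f^[j] '' T l := by
    simp only [iUnion_subset_iff, image_subset_iff]
    intro n hn x hx
    obtain ⟨l, z, hz, j, hj, hjr, hxz⟩ :=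
      exists_iterate_eq_iterate_of_mapsTo hcov hrpos hret hx hn
    rw [mem_preimage, hxz]
    exact mem_iUnion.2 ⟨l, mem_iUnion₂.2 ⟨j, ⟨hj, hjr⟩, mem_image_of_mem _ (hBT l hz)⟩⟩
  intro y hy
  obtain ⟨l, j, ⟨hj, -⟩, z, hz, rfl⟩ := by
    simpa only [mem_iUnion, exists_prop, mem_Icc] using
      closure_minimal horbit hclosed (hYrec hy)
  exact iterate_mem_iUnion_image_of_mem hcov hrpos hret hfirst (hTY l hz) hj hy

def towerUnion (f : X → X) (B : ι → Set X) (r : ι → ℕ) : Set X :=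
  ⋃ l, ⋃ j : ℕ, ⋃ _ : j < r l, f^[j] '' B l

theorem mem_towerUnion {x : X} :
    x ∈ towerUnion f B r ↔ ∃ l, ∃ j < r l, ∃ z ∈ B l, f^[j] z = x := by
  simp [towerUnion]

theorem iUnion_subset_towerUnion (hrpos : ∀ l, 1 ≤ r l) : ⋃ l, B l ⊆ towerUnion f B r :=
  iUnion_subset fun l z hz => mem_towerUnion.2 ⟨l, 0, hrpos l, z, hz, rfl⟩

theorem mapsTo_towerUnion (hcov : Y ⊆ ⋃ l, B l) (hrpos : ∀ l, 1 ≤ r l)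
    (hret : ∀ l, MapsTo f^[r l] (B l) Y) : MapsTo f (towerUnion f B r) (towerUnion f B r) := by
  intro x hx
  obtain ⟨l, j, hj, z, hz, rfl⟩ := mem_towerUnion.1 hx
  rw [← iterate_succ_apply' f j z]
  rcases (Nat.succ_le_of_lt hj).lt_or_eq with hlt | heq
  · exact mem_towerUnion.2 ⟨l, j + 1, hlt, z, hz, rfl⟩
  · exact iUnion_subset_towerUnion hrpos (hcov (heq ▸ hret l hz))

theorem surjOn_towerUnion (hBY : ∀ l, B l ⊆ Y) (hrpos : ∀ l, 1 ≤ r l)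
    (htop : Y ⊆ ⋃ l, f^[r l] '' B l) : SurjOn f (towerUnion f B r) (towerUnion f B r) := by
  intro x hx
  obtain ⟨l, j, hj, z, hz, rfl⟩ := mem_towerUnion.1 hx
  cases j with
  | zero =>
    obtain ⟨l', w, hw, rfl⟩ := mem_iUnion.1 (htop (hBY l hz))
    have hlt : r l' - 1 < r l' := by have := hrpos l'; omega
    refine ⟨f^[r l' - 1] w, mem_towerUnion.2 ⟨l', r l' - 1, hlt, w, hw, rfl⟩, ?_⟩
    rw [← iterate_succ_apply' f, Nat.succ_eq_add_one, Nat.sub_add_cancel (hrpos l')]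
    rfl
  | succ j =>
    exact ⟨f^[j] z, mem_towerUnion.2 ⟨l, j, by omega, z, hz, rfl⟩,
      (iterate_succ_apply' f j z).symm⟩

theorem disjoint_image_iterate_of_first_return (hf : Injective f)
    (hB : Pairwise (Disjoint on B)) (hBY : ∀ l, B l ⊆ Y)
    (hfirst : ∀ l, ∀ y ∈ B l, ∀ n, 1 ≤ n → n < r l → f^[n] y ∉ Y)
    {l l' : ι} {j j' : ℕ} (hj : j < r l) (hj' : j' < r l') (hne : (l, j) ≠ (l', j')) :
    Disjoint (f^[j] '' B l) (f^[j'] '' B l') := by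
  wlog hle : j ≤ j' generalizing l l' j j'
  · exact (this hj' hj hne.symm (le_of_not_ge hle)).symm
  obtain ⟨k, rfl⟩ := Nat.exists_eq_add_of_le hle
  rw [disjoint_left]
  rintro _ ⟨z, hz, rfl⟩ ⟨z', hz', heq⟩
  have hzz' : f^[k] z' = z := hf.iterate j (by rwa [← iterate_add_apply])
  rcases Nat.eq_zero_or_pos k with rfl | hk
  · obtain rfl : l = l' := hB.eq (not_disjoint_iff.2 ⟨z, hz, hzz' ▸ hz'⟩)
    exact hne rfl
  · exact hfirst l' z' hz' k hk (by omega) (hzz' ▸ hBY l hz)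

theorem towerUnion_subset_iUnion_iterate (hBY : ∀ l, B l ⊆ Y) {N : ℕ} (hrN : ∀ l, r l ≤ N) :
    towerUnion f B r ⊆ ⋃ n : ℕ, ⋃ _ : n < N, f^[n] '' Y := by
  intro x hx
  obtain ⟨l, j, hj, z, hz, rfl⟩ := mem_towerUnion.1 hx
  exact mem_iUnion₂.2 ⟨j, hj.trans_le (hrN l), z, hBY l hz, rfl⟩

end Towers

section Orbits

variable {X : Type*}

theorem iUnion_zpow_image_subset_of_bijOn {σ : Equiv.Perm X} {U : Set X} (hU : BijOn σ U U) {Y : Set X} (hYU : Y ⊆ U) :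
    ⋃ n : ℤ, ⇑(σ ^ n) '' Y ⊆ U :=
  iUnion_subset fun n => ((hU.perm_zpow n).mapsTo.mono_left hYU).image_subset

theorem iUnion_iterate_image_subset_iUnion_zpow_image (σ : Equiv.Perm X) (Y : Set X) (N : ℕ) :
    (⋃ n : ℕ, ⋃ _ : n < N, (⇑σ)^[n] '' Y) ⊆ ⋃ n : ℤ, ⇑(σ ^ n) '' Y :=
  iUnion₂_subset fun n _ => subset_iUnion_of_subset (n : ℤ) (by rw [zpow_natCast]; rfl)

end Orbits

theorem stmt_5_general {X : Type*} [MetricSpace X] (h : X ≃ₜ X)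
    (Y : Set X) (hYcomp : IsCompact Y)
    (hYrec : Y ⊆ closure (⋃ n : ℕ, ⋃ _ : 1 ≤ n, (⇑h)^[n] '' Y))
    (m : ℕ) (T : Fin (m + 1) → Set X) (r : Fin (m + 1) → ℕ)
    (hTcomp : ∀ l, IsCompact (T l))
    (hTY : ∀ l, T l ⊆ Y) (hcover : (⋃ l, T l) = Y)
    (hrpos : ∀ l, 1 ≤ r l) (hrmono : Monotone r)
    (hret : ∀ l, (⇑h)^[r l] '' T l ⊆ Y)
    (hfirst : ∀ l : Fin (m + 1), ∀ y ∈ T l \ ⋃ j, ⋃ _ : j < l, T j,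
      ∀ n, 1 ≤ n → n < r l → (⇑h)^[n] y ∉ Y) :
    (⋃ n : ℤ, ⇑(h.toEquiv ^ n) '' Y)
        = (⋃ l, ⋃ j : ℕ, ⋃ _ : j < r l, (⇑h)^[j] '' (T l \ ⋃ i, ⋃ _ : i < l, T i)) ∧
      (∀ l l' : Fin (m + 1), ∀ j j' : ℕ, j < r l → j' < r l' → (l, j) ≠ (l', j') →
        Disjoint ((⇑h)^[j] '' (T l \ ⋃ i, ⋃ _ : i < l, T i))
          ((⇑h)^[j'] '' (T l' \ ⋃ i, ⋃ _ : i < l', T i))) ∧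
      (⋃ n : ℤ, ⇑(h.toEquiv ^ n) '' Y)
        = (⋃ n : ℕ, ⋃ _ : n < r (Fin.last m), (⇑h)^[n] '' Y) ∧
      IsCompact (⋃ n : ℤ, ⇑(h.toEquiv ^ n) '' Y) := by
  set B : Fin (m + 1) → Set X := fun l => T l \ ⋃ i, ⋃ _ : i < l, T i
  have hB : disjointed T = B := funext (disjointed_eq_diff_iUnion_lt T)
  have hBT : ∀ l, B l ⊆ T l := fun l => sdiff_subset
  have hBY : ∀ l, B l ⊆ Y := fun l => (hBT l).trans (hTY l)
  have hcov : Y ⊆ ⋃ l, B l := by rw [← hB, iUnion_disjointed, hcover]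
  have hretB : ∀ l, MapsTo (⇑h)^[r l] (B l) Y := fun l =>
    (mapsTo_iff_image_subset.2 (hret l)).mono_left (hBT l)
  have htop := subset_iUnion_image_of_subset_closure hcov hrpos hretB hfirst h.continuous
    hYrec hTcomp hTY hBT
  have hbij : BijOn h.toEquiv (towerUnion h B r) (towerUnion h B r) :=
    ⟨mapsTo_towerUnion hcov hrpos hretB, h.injective.injOn, surjOn_towerUnion hBY hrpos htop⟩
  have horbit_sub := iUnion_zpow_image_subset_of_bijOn hbij
    (hcov.trans (iUnion_subset_towerUnion hrpos))
  have htower_sub : towerUnion h B r ⊆ _ :=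
    towerUnion_subset_iUnion_iterate hBY fun l => hrmono (Fin.le_last l)
  have hiter_sub := iUnion_iterate_image_subset_iUnion_zpow_image h.toEquiv Y (r (Fin.last m))
  have hZN := (horbit_sub.trans htower_sub).antisymm hiter_sub
  refine ⟨horbit_sub.antisymm (htower_sub.trans hiter_sub),
    fun l l' j j' => disjoint_image_iterate_of_first_return h.injective
      (hB ▸ disjoint_disjointed T) hBY hfirst, hZN, hZN ▸ ?_⟩
  exact (finite_Iio _).isCompact_biUnion fun n _ => hYcomp.image (h.continuous.iterate n)

/-- A statement about a Rokhlin system of towers for `(X, h, Y)`. -/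
theorem stmt_5 {X : Type*} [MetricSpace X] [CompactSpace X] (h : X ≃ₜ X)
    (Y : Set X) (hYne : Y.Nonempty) (hYcomp : IsCompact Y)
    (hYrec : Y ⊆ closure (⋃ n : ℕ, ⋃ _ : 1 ≤ n, (⇑h)^[n] '' Y))
    (m : ℕ) (T : Fin (m + 1) → Set X) (r : Fin (m + 1) → ℕ)
    (hTne : ∀ l, (T l).Nonempty) (hTcomp : ∀ l, IsCompact (T l))
    (hTY : ∀ l, T l ⊆ Y) (hcover : (⋃ l, T l) = Y)
    (hrpos : ∀ l, 1 ≤ r l) (hrmono : Monotone r)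
    (hret : ∀ l, (⇑h)^[r l] '' T l ⊆ Y)
    (hfirst : ∀ l : Fin (m + 1), ∀ y ∈ T l \ ⋃ j, ⋃ _ : j < l, T j,
      ∀ n, 1 ≤ n → n < r l → (⇑h)^[n] y ∉ Y)
    (hrealized : ∀ l, ∃ y ∈ Y, (⇑h)^[r l] y ∈ Y ∧
      ∀ n, 1 ≤ n → n < r l → (⇑h)^[n] y ∉ Y) :
    (⋃ n : ℤ, ⇑(h.toEquiv ^ n) '' Y)
        = (⋃ l, ⋃ j : ℕ, ⋃ _ : j < r l, (⇑h)^[j] '' (T l \ ⋃ i, ⋃ _ : i < l, T i)) ∧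
      (∀ l l' : Fin (m + 1), ∀ j j' : ℕ, j < r l → j' < r l' → (l, j) ≠ (l', j') →
        Disjoint ((⇑h)^[j] '' (T l \ ⋃ i, ⋃ _ : i < l, T i))
          ((⇑h)^[j'] '' (T l' \ ⋃ i, ⋃ _ : i < l', T i))) ∧
      (⋃ n : ℤ, ⇑(h.toEquiv ^ n) '' Y)
        = (⋃ n : ℕ, ⋃ _ : n < r (Fin.last m), (⇑h)^[n] '' Y) ∧
      IsCompact (⋃ n : ℤ, ⇑(h.toEquiv ^ n) '' Y) :=
  stmt_5_general h Y hYcomp hYrec m T r hTcomp hTY hcover hrpos hrmono hret hfirst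
end

section
/- With the hypotheses of a Rokhlin system, Y is the disjoint union of the sets h^{r_l}(T_l^0) for l = 0, 1, …, m (the tops of the towers partition Y). -/
/-- A statement about a Rokhlin system of towers for `(X, h, Y)`. -/
theorem stmt_6 {X : Type*} [MetricSpace X] [CompactSpace X] (h : X ≃ₜ X)
    (Y : Set X) (hYne : Y.Nonempty) (hYcomp : IsCompact Y)
    (hYrec : Y ⊆ closure (⋃ n : ℕ, ⋃ _ : 1 ≤ n, (⇑h)^[n] '' Y))
    (m : ℕ) (T : Fin (m + 1) → Set X) (r : Fin (m + 1) → ℕ)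
    (hTne : ∀ l, (T l).Nonempty) (hTcomp : ∀ l, IsCompact (T l))
    (hTY : ∀ l, T l ⊆ Y) (hcover : (⋃ l, T l) = Y)
    (hrpos : ∀ l, 1 ≤ r l) (hrmono : Monotone r)
    (hret : ∀ l, (⇑h)^[r l] '' T l ⊆ Y)
    (hfirst : ∀ l : Fin (m + 1), ∀ y ∈ T l \ ⋃ j, ⋃ _ : j < l, T j,
      ∀ n, 1 ≤ n → n < r l → (⇑h)^[n] y ∉ Y)
    (hrealized : ∀ l, ∃ y ∈ Y, (⇑h)^[r l] y ∈ Y ∧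
      ∀ n, 1 ≤ n → n < r l → (⇑h)^[n] y ∉ Y) :
    (⋃ l, (⇑h)^[r l] '' (T l \ ⋃ j, ⋃ _ : j < l, T j)) = Y ∧
      ∀ l l' : Fin (m + 1), l ≠ l' →
        Disjoint ((⇑h)^[r l] '' (T l \ ⋃ j, ⋃ _ : j < l, T j))
          ((⇑h)^[r l'] '' (T l' \ ⋃ j, ⋃ _ : j < l', T j)) := by
  classical
  -- every point of Y lies in some T_l^0 (take minimal l with u ∈ T l)
  have hmin : ∀ u ∈ Y, ∃ l, u ∈ T l \ ⋃ j, ⋃ _ : j < l, T j := by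
    intro u hu
    have hex : ∃ l, u ∈ T l := by
      have : u ∈ ⋃ l, T l := hcover ▸ hu
      simpa using this
    let s : Finset (Fin (m + 1)) := Finset.univ.filter (fun l => u ∈ T l)
    have hs : s.Nonempty := ⟨hex.choose, by simp [s, hex.choose_spec]⟩
    refine ⟨s.min' hs, ?_, ?_⟩
    · have := s.min'_mem hs
      simpa [s] using this
    · simp only [Set.mem_iUnion, not_exists]
      intro j hj hmem
      exact absurd (s.min'_le j (by simp [s, hmem])) (not_le.2 hj)
  -- key induction: if u ∈ Y and h^[s] u ∈ Y with s ≥ 1, then h^[s] u is in a tower top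
  have lemB : ∀ s : ℕ, ∀ u ∈ Y, 1 ≤ s → (⇑h)^[s] u ∈ Y →
      (⇑h)^[s] u ∈ ⋃ l, (⇑h)^[r l] '' (T l \ ⋃ j, ⋃ _ : j < l, T j) := by
    intro s
    induction s using Nat.strong_induction_on with
    | _ s ih =>
      intro u hu hs1 hsY
      obtain ⟨l, hl⟩ := hmin u hu
      have hrl : r l ≤ s := by
        by_contra hlt
        exact hfirst l u hl s hs1 (not_le.1 hlt) hsY
      rcases eq_or_lt_of_le hrl with heq | hlt
      · exact Set.mem_iUnion.2 ⟨l, ⟨u, hl, by rw [heq]⟩⟩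
      · have hu' : (⇑h)^[r l] u ∈ Y := hret l ⟨u, hl.1, rfl⟩
        have hcomp : (⇑h)^[s - r l] ((⇑h)^[r l] u) = (⇑h)^[s] u := by
          rw [← Function.iterate_add_apply]
          congr 1
          have := hrpos l
          omega
        have hrl1 := hrpos l
        have := ih (s - r l) (by omega) _ hu' (by omega)
          (by rw [hcomp]; exact hsY)
        rwa [hcomp] at this
  set R := r (Fin.last m) with hR
  -- any forward iterate of Y lands in a union over bounded exponents
  have lemA : ∀ n : ℕ, ∀ w ∈ Y, 1 ≤ n →
      (⇑h)^[n] w ∈ ⋃ s ∈ Finset.Icc 1 R, (⇑h)^[s] '' Y := by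
    intro n
    induction n using Nat.strong_induction_on with
    | _ n ih =>
      intro w hw hn1
      by_cases hle : n ≤ R
      · exact Set.mem_biUnion (Finset.mem_Icc.2 ⟨hn1, hle⟩) ⟨w, hw, rfl⟩
      · obtain ⟨l, hl⟩ : ∃ l, w ∈ T l := by
          have : w ∈ ⋃ l, T l := hcover ▸ hw
          simpa using this
        have hw' : (⇑h)^[r l] w ∈ Y := hret l ⟨w, hl, rfl⟩
        have hlle : r l ≤ R := hrmono (Fin.le_last l)
        have hrl1 := hrpos l
        have hcomp : (⇑h)^[n - r l] ((⇑h)^[r l] w) = (⇑h)^[n] w := by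
          rw [← Function.iterate_add_apply]
          congr 1
          omega
        have := ih (n - r l) (by omega) _ hw' (by omega)
        rwa [hcomp] at this
  -- the bounded union is compact, hence closed
  have hKcomp : IsCompact (⋃ s ∈ Finset.Icc 1 R, (⇑h)^[s] '' Y) := by
    apply (Finset.Icc 1 R).isCompact_biUnion
    intro s _
    exact hYcomp.image (h.continuous.iterate s)
  have hYK : Y ⊆ ⋃ s ∈ Finset.Icc 1 R, (⇑h)^[s] '' Y := by
    have hsub : (⋃ n : ℕ, ⋃ _ : 1 ≤ n, (⇑h)^[n] '' Y) ⊆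
        ⋃ s ∈ Finset.Icc 1 R, (⇑h)^[s] '' Y := by
      intro z hz
      simp only [Set.mem_iUnion, Set.mem_image] at hz
      obtain ⟨n, hn, w, hw, rfl⟩ := hz
      exact lemA n w hw hn
    intro y hy
    exact (IsClosed.closure_subset_iff hKcomp.isClosed).2 hsub (hYrec hy)
  constructor
  · apply le_antisymm
    · intro z hz
      simp only [Set.mem_iUnion, Set.mem_image] at hz
      obtain ⟨l, x, hx, rfl⟩ := hz
      exact hret l ⟨x, hx.1, rfl⟩
    · intro y hy
      have := hYK hy
      simp only [Set.mem_iUnion, Set.mem_image, Finset.mem_Icc] at this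
      obtain ⟨s, ⟨hs1, _⟩, u, hu, rfl⟩ := this
      exact lemB s u hu hs1 hy
  · -- disjointness
    have key : ∀ l l' : Fin (m + 1), l < l' →
        Disjoint ((⇑h)^[r l] '' (T l \ ⋃ j, ⋃ _ : j < l, T j))
          ((⇑h)^[r l'] '' (T l' \ ⋃ j, ⋃ _ : j < l', T j)) := by
      intro l l' hll
      rw [Set.disjoint_left]
      rintro z ⟨x, hx, rfl⟩ ⟨x', hx', heq⟩
      have hrle : r l ≤ r l' := hrmono hll.le
      rcases eq_or_lt_of_le hrle with hre | hrlt
      · -- equal return times: x = x', but x ∈ T l with l < l'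
        have hxx : x' = x := by
          apply Function.Injective.iterate h.injective (r l)
          rw [← hre] at heq
          exact heq
        apply hx'.2
        exact Set.mem_iUnion.2 ⟨l, Set.mem_iUnion.2 ⟨hll, hxx ▸ hx.1⟩⟩
      · -- strictly smaller: h^[r l' - r l] x' = x ∈ Y contradicts first return
        have hcomp : (⇑h)^[r l] ((⇑h)^[r l' - r l] x') = (⇑h)^[r l'] x' := by
          rw [← Function.iterate_add_apply]
          congr 1
          omega
        have hxx : (⇑h)^[r l' - r l] x' = x := by
          apply Function.Injective.iterate h.injective (r l)
          rw [hcomp, heq]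
        have : (⇑h)^[r l' - r l] x' ∈ Y := hxx ▸ hTY l hx.1
        exact hfirst l' x' hx' (r l' - r l) (Nat.sub_pos_of_lt hrlt) (Nat.sub_lt (by omega) (hrpos l)) this
    intro l l' hne
    rcases hne.lt_or_gt with hlt | hlt
    · exact key l l' hlt
    · exact (key l' l hlt).symm
end

section
/- With the hypotheses of a Rokhlin system and assuming ⋃_{n∈ℤ} hⁿ(Y) = X, the complement X \ Y equals the disjoint union over l = 0,…,m and j = 1,…,r_l−1 of the sets h^j(T_l^0). -/
/-! The tower union `K = ⋃_{l, j < r_l} h^j(T_l)` is compact and forward invariant, and the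
recurrence `Y ⊆ closure ⋃_{n ≥ 1} hⁿ(Y)` gives `K ⊆ h(K)`. So `K` is `h`-invariant and
contains `Y`, hence is all of `X`. A point outside `Y` is therefore some `h^j(t)` with `t ∈ Y`;
cutting its orbit at the returns to `Y`, it lies at a height `1 ≤ i < r_l` above the level
`T_l^0 = disjointed T l` of its last return. Disjointness is the first-return property of the
levels `T_l^0`. -/

open Set Pointwise

theorem Equiv.Perm.zpow_image_eq_of_image_eq {α : Type*} {e : Equiv.Perm α} {s : Set α}
    (hs : e '' s = s) (n : ℤ) : ⇑(e ^ n) '' s = s :=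
  (MulAction.stabilizer (Equiv.Perm α) s).zpow_mem (show e • s = s from hs) n

theorem disjointed_eq_diff_biUnion {α ι : Type*} [Preorder ι] [LocallyFiniteOrderBot ι]
    (f : ι → Set α) (i : ι) : disjointed f i = f i \ ⋃ j < i, f j := by
  simp [disjointed_apply, Finset.sup_set_eq_biUnion]

namespace Rokhlin

section Towers

variable {X ι : Type*} {f : X → X} {T : ι → Set X} {r : ι → ℕ}

variable (f T r) in
def towers : Set X := ⋃ l, ⋃ j < r l, f^[j] '' T l

theorem mem_towers {x : X} :
    x ∈ towers f T r ↔ ∃ l, ∃ j < r l, ∃ t ∈ T l, f^[j] t = x := by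
  simp [towers]

theorem iUnion_subset_towers (hrpos : ∀ l, 1 ≤ r l) : ⋃ l, T l ⊆ towers f T r :=
  iUnion_subset fun l t ht => mem_towers.2 ⟨l, 0, hrpos l, t, ht, rfl⟩

theorem mapsTo_towers (hrpos : ∀ l, 1 ≤ r l) (hret : ∀ l, f^[r l] '' T l ⊆ ⋃ l, T l) :
    MapsTo f (towers f T r) (towers f T r) := by
  intro x hx
  obtain ⟨l, j, hj, t, ht, rfl⟩ := mem_towers.1 hx
  rw [← Function.iterate_succ_apply' f j t]
  rcases (Nat.succ_le_of_lt hj).lt_or_eq with hlt | heq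
  · exact mem_towers.2 ⟨l, j + 1, hlt, t, ht, rfl⟩
  · exact iUnion_subset_towers hrpos (hret l (heq ▸ mem_image_of_mem _ ht))

theorem isCompact_towers [TopologicalSpace X] [Finite ι] (hf : Continuous f)
    (hT : ∀ l, IsCompact (T l)) : IsCompact (towers f T r) :=
  isCompact_iUnion fun l =>
    (finite_Iio (r l)).isCompact_biUnion fun j _ => (hT l).image (hf.iterate j)

theorem image_towers [TopologicalSpace X] [T2Space X] [Finite ι] (hf : Continuous f)
    (hT : ∀ l, IsCompact (T l)) (hrpos : ∀ l, 1 ≤ r l)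
    (hret : ∀ l, f^[r l] '' T l ⊆ ⋃ l, T l)
    (hrec : ⋃ l, T l ⊆ closure (⋃ n : ℕ, ⋃ _ : 1 ≤ n, f^[n] '' ⋃ l, T l)) :
    f '' towers f T r = towers f T r := by
  have hmaps := mapsTo_towers hrpos hret
  refine hmaps.image_subset.antisymm ?_
  have hbase : ⋃ l, T l ⊆ f '' towers f T r := by
    refine hrec.trans (closure_minimal ?_ ((isCompact_towers hf hT).image hf).isClosed)
    simp only [iUnion_subset_iff]
    rintro (_ | n) hn
    · omega
    · rw [Function.iterate_succ', image_comp]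
      exact image_mono <|
        (image_mono (iUnion_subset_towers hrpos)).trans (hmaps.iterate n).image_subset
  intro x hx
  obtain ⟨l, j, hj, t, ht, rfl⟩ := mem_towers.1 hx
  rcases j with _ | j
  · exact hbase (mem_iUnion_of_mem l ht)
  · rw [Function.iterate_succ_apply']
    exact mem_image_of_mem f (mem_towers.2 ⟨l, j, by omega, t, ht, rfl⟩)

theorem towers_eq_univ [TopologicalSpace X] [T2Space X] [Finite ι] (h : X ≃ₜ X)
    (hT : ∀ l, IsCompact (T l)) (hrpos : ∀ l, 1 ≤ r l)
    (hret : ∀ l, (⇑h)^[r l] '' T l ⊆ ⋃ l, T l)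
    (hrec : ⋃ l, T l ⊆ closure (⋃ n : ℕ, ⋃ _ : 1 ≤ n, (⇑h)^[n] '' ⋃ l, T l))
    (hfull : ⋃ n : ℤ, ⇑(h.toEquiv ^ n) '' ⋃ l, T l = univ) :
    towers h T r = univ := by
  have hinv := Equiv.Perm.zpow_image_eq_of_image_eq (e := h.toEquiv)
    (image_towers h.continuous hT hrpos hret hrec)
  refine eq_univ_of_univ_subset (hfull ▸ iUnion_subset fun n => ?_)
  exact (image_mono (iUnion_subset_towers hrpos)).trans (hinv n).subset

end Towers

section Levels

variable {X ι : Type*} [LinearOrder ι] [LocallyFiniteOrderBot ι]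
  {f : X → X} {T : ι → Set X} {r : ι → ℕ}

theorem iterate_mem_iUnion_levels (hrpos : ∀ l, 1 ≤ r l)
    (hret : ∀ l, f^[r l] '' T l ⊆ ⋃ l, T l) (j : ℕ) {y : X} (hy : y ∈ ⋃ l, T l)
    (hj : f^[j] y ∉ ⋃ l, T l) :
    f^[j] y ∈ ⋃ l, ⋃ i, ⋃ (_ : 1 ≤ i ∧ i < r l), f^[i] '' disjointed T l := by
  induction j using Nat.strong_induction_on generalizing y with
  | _ j ih =>
    obtain ⟨l, hl⟩ := mem_iUnion.1 ((iUnion_disjointed (f := T)).symm ▸ hy)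
    by_cases hjl : j < r l
    · have hj0 : j ≠ 0 := by rintro rfl; exact hj hy
      exact mem_iUnion_of_mem l <| mem_iUnion₂_of_mem ⟨by omega, hjl⟩ (mem_image_of_mem _ hl)
    · have hsplit : f^[j] y = f^[j - r l] (f^[r l] y) := by
        rw [← Function.iterate_add_apply, Nat.sub_add_cancel (not_lt.1 hjl)]
      have hret_y : f^[r l] y ∈ ⋃ l, T l :=
        hret l (mem_image_of_mem _ (disjointed_subset T l hl))
      rw [hsplit] at hj ⊢
      exact ih _ (by have := hrpos l; omega) hret_y hj

theorem disjoint_image_iterate_disjointed_of_le (hf : f.Injective)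
    (hfirst : ∀ l, ∀ y ∈ disjointed T l, ∀ n, 1 ≤ n → n < r l →
      f^[n] y ∉ ⋃ l, T l)
    {l l' : ι} {j j' : ℕ} (hj' : j' < r l') (hne : (l, j) ≠ (l', j')) (hle : j ≤ j') :
    Disjoint (f^[j] '' disjointed T l) (f^[j'] '' disjointed T l') := by
  rw [disjoint_left]
  rintro _ ⟨z, hz, rfl⟩ ⟨z', hz', heq⟩
  have hz'z : f^[j' - j] z' = z := by
    apply hf.iterate j
    rw [← Function.iterate_add_apply, Nat.add_sub_cancel' hle, heq]
  rcases hle.lt_or_eq with hlt | rfl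
  · exact hfirst l' z' hz' (j' - j) (by omega) (by omega)
      (hz'z ▸ mem_iUnion_of_mem l (disjointed_subset T l hz))
  · have hll : l ≠ l' := fun hll => hne (by rw [hll])
    rw [Nat.sub_self, Function.iterate_zero_apply] at hz'z
    exact disjoint_left.1 (disjoint_disjointed T hll) hz (hz'z ▸ hz')

theorem disjoint_image_iterate_disjointed (hf : f.Injective)
    (hfirst : ∀ l, ∀ y ∈ disjointed T l, ∀ n, 1 ≤ n → n < r l →
      f^[n] y ∉ ⋃ l, T l)
    {l l' : ι} {j j' : ℕ} (hj : j < r l) (hj' : j' < r l') (hne : (l, j) ≠ (l', j')) :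
    Disjoint (f^[j] '' disjointed T l) (f^[j'] '' disjointed T l') := by
  rcases le_total j j' with hle | hle
  · exact disjoint_image_iterate_disjointed_of_le hf hfirst hj' hne hle
  · exact (disjoint_image_iterate_disjointed_of_le hf hfirst hj hne.symm hle).symm

end Levels

end Rokhlin

theorem stmt_7_general {X : Type*} [MetricSpace X] (h : X ≃ₜ X)
    (Y : Set X)
    (hYrec : Y ⊆ closure (⋃ n : ℕ, ⋃ _ : 1 ≤ n, (⇑h)^[n] '' Y))
    (m : ℕ) (T : Fin (m + 1) → Set X) (r : Fin (m + 1) → ℕ)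
    (hTcomp : ∀ l, IsCompact (T l))
    (hcover : (⋃ l, T l) = Y)
    (hrpos : ∀ l, 1 ≤ r l)
    (hret : ∀ l, (⇑h)^[r l] '' T l ⊆ Y)
    (hfirst : ∀ l : Fin (m + 1), ∀ y ∈ T l \ ⋃ j, ⋃ _ : j < l, T j,
      ∀ n, 1 ≤ n → n < r l → (⇑h)^[n] y ∉ Y)
    (hfull : (⋃ n : ℤ, ⇑(h.toEquiv ^ n) '' Y) = Set.univ) :
    Set.univ \ Y
        = (⋃ l, ⋃ j : ℕ, ⋃ _ : 1 ≤ j ∧ j < r l,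
            (⇑h)^[j] '' (T l \ ⋃ i, ⋃ _ : i < l, T i)) ∧
      ∀ l l' : Fin (m + 1), ∀ j j' : ℕ, j < r l → j' < r l' → (l, j) ≠ (l', j') →
        Disjoint ((⇑h)^[j] '' (T l \ ⋃ i, ⋃ _ : i < l, T i))
          ((⇑h)^[j'] '' (T l' \ ⋃ i, ⋃ _ : i < l', T i)) := by
  subst hcover
  simp only [← disjointed_eq_diff_biUnion] at hfirst ⊢
  have htowers := Rokhlin.towers_eq_univ h hTcomp hrpos hret hYrec hfull
  refine ⟨Subset.antisymm ?_ ?_, fun l l' j j' hj hj' hne =>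
    Rokhlin.disjoint_image_iterate_disjointed h.injective hfirst hj hj' hne⟩
  · rintro x ⟨-, hx⟩
    obtain ⟨l, j, -, t, ht, rfl⟩ := Rokhlin.mem_towers.1 (htowers ▸ mem_univ x)
    exact Rokhlin.iterate_mem_iUnion_levels hrpos hret j (mem_iUnion_of_mem l ht) hx
  · simp only [iUnion_subset_iff]
    rintro l i ⟨hi1, hi2⟩ _ ⟨z, hz, rfl⟩
    exact ⟨trivial, hfirst l z hz i hi1 hi2⟩

/-- A statement about a Rokhlin system of towers for `(X, h, Y)`. -/
theorem stmt_7 {X : Type*} [MetricSpace X] [CompactSpace X] (h : X ≃ₜ X)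
    (Y : Set X) (hYne : Y.Nonempty) (hYcomp : IsCompact Y)
    (hYrec : Y ⊆ closure (⋃ n : ℕ, ⋃ _ : 1 ≤ n, (⇑h)^[n] '' Y))
    (m : ℕ) (T : Fin (m + 1) → Set X) (r : Fin (m + 1) → ℕ)
    (hTne : ∀ l, (T l).Nonempty) (hTcomp : ∀ l, IsCompact (T l))
    (hTY : ∀ l, T l ⊆ Y) (hcover : (⋃ l, T l) = Y)
    (hrpos : ∀ l, 1 ≤ r l) (hrmono : Monotone r)
    (hret : ∀ l, (⇑h)^[r l] '' T l ⊆ Y)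
    (hfirst : ∀ l : Fin (m + 1), ∀ y ∈ T l \ ⋃ j, ⋃ _ : j < l, T j,
      ∀ n, 1 ≤ n → n < r l → (⇑h)^[n] y ∉ Y)
    (hrealized : ∀ l, ∃ y ∈ Y, (⇑h)^[r l] y ∈ Y ∧
      ∀ n, 1 ≤ n → n < r l → (⇑h)^[n] y ∉ Y)
    (hfull : (⋃ n : ℤ, ⇑(h.toEquiv ^ n) '' Y) = Set.univ) :
    Set.univ \ Y
        = (⋃ l, ⋃ j : ℕ, ⋃ _ : 1 ≤ j ∧ j < r l,
            (⇑h)^[j] '' (T l \ ⋃ i, ⋃ _ : i < l, T i)) ∧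
      ∀ l l' : Fin (m + 1), ∀ j j' : ℕ, j < r l → j' < r l' → (l, j) ≠ (l', j') →
        Disjoint ((⇑h)^[j] '' (T l \ ⋃ i, ⋃ _ : i < l, T i))
          ((⇑h)^[j'] '' (T l' \ ⋃ i, ⋃ _ : i < l', T i)) :=
  stmt_7_general h Y hYrec m T r hTcomp hcover hrpos hret hfirst hfull
end

section
/- With the hypotheses of a Rokhlin system, for every n ≥ 0 one has ⋃_{j=0}^{n−1} h^j(Y) = ⋃_{l=0}^{m} ⋃_{j=0}^{min(n, r_l)−1} h^j(T_l^0), and these latter sets are pairwise disjoint. -/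
/-- A statement about a Rokhlin system of towers for `(X, h, Y)`. -/
theorem stmt_8 {X : Type*} [MetricSpace X] [CompactSpace X] (h : X ≃ₜ X)
    (Y : Set X) (hYne : Y.Nonempty) (hYcomp : IsCompact Y)
    (hYrec : Y ⊆ closure (⋃ n : ℕ, ⋃ _ : 1 ≤ n, (⇑h)^[n] '' Y))
    (m : ℕ) (T : Fin (m + 1) → Set X) (r : Fin (m + 1) → ℕ)
    (hTne : ∀ l, (T l).Nonempty) (hTcomp : ∀ l, IsCompact (T l))
    (hTY : ∀ l, T l ⊆ Y) (hcover : (⋃ l, T l) = Y)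
    (hrpos : ∀ l, 1 ≤ r l) (hrmono : Monotone r)
    (hret : ∀ l, (⇑h)^[r l] '' T l ⊆ Y)
    (hfirst : ∀ l : Fin (m + 1), ∀ y ∈ T l \ ⋃ j, ⋃ _ : j < l, T j,
      ∀ n, 1 ≤ n → n < r l → (⇑h)^[n] y ∉ Y)
    (hrealized : ∀ l, ∃ y ∈ Y, (⇑h)^[r l] y ∈ Y ∧
      ∀ n, 1 ≤ n → n < r l → (⇑h)^[n] y ∉ Y) :
    (∀ n : ℕ, (⋃ j : ℕ, ⋃ _ : j < n, (⇑h)^[j] '' Y)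
        = ⋃ l, ⋃ j : ℕ, ⋃ _ : j < min n (r l),
            (⇑h)^[j] '' (T l \ ⋃ i, ⋃ _ : i < l, T i)) ∧
      ∀ l l' : Fin (m + 1), ∀ j j' : ℕ, j < r l → j' < r l' → (l, j) ≠ (l', j') →
        Disjoint ((⇑h)^[j] '' (T l \ ⋃ i, ⋃ _ : i < l, T i))
          ((⇑h)^[j'] '' (T l' \ ⋃ i, ⋃ _ : i < l', T i)) := by

  classical
  set T0 : Fin (m + 1) → Set X := fun l => T l \ ⋃ i, ⋃ _ : i < l, T i with hT0def
  have hT0sub : ∀ l, T0 l ⊆ T l := fun l => Set.diff_subset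
  have hT0Y : ∀ l, T0 l ⊆ Y := fun l => (hT0sub l).trans (hTY l)
  have hcov : ∀ y ∈ Y, ∃ l, y ∈ T0 l := by
    intro y hy
    have h1 : y ∈ ⋃ l, T l := by rw [hcover]; exact hy
    rw [Set.mem_iUnion] at h1
    obtain ⟨l, hl⟩ := h1
    obtain ⟨l0, hl0, hmin⟩ := (wellFounded_lt (α := Fin (m + 1))).has_min {i | y ∈ T i} ⟨l, hl⟩
    refine ⟨l0, hl0, ?_⟩
    simp only [Set.mem_iUnion, not_exists]
    intro i hi hyi
    exact hmin i hyi hi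
  have key : ∀ j, ∀ y ∈ Y, ∃ l, ∃ j' ≤ j, j' < r l ∧ (⇑h)^[j] y ∈ (⇑h)^[j'] '' T0 l := by
    intro j
    induction j using Nat.strong_induction_on with
    | _ j IH =>
      intro y hy
      obtain ⟨l, hl⟩ := hcov y hy
      by_cases hjr : j < r l
      · exact ⟨l, j, le_refl j, hjr, ⟨y, hl, rfl⟩⟩
      · push_neg at hjr
        have hy2 : (⇑h)^[r l] y ∈ Y := hret l ⟨y, hT0sub l hl, rfl⟩
        have hlt : j - r l < j := Nat.sub_lt (lt_of_lt_of_le (hrpos l) hjr) (hrpos l)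
        obtain ⟨l', j', hle, hlt', hmem⟩ := IH (j - r l) hlt _ hy2
        refine ⟨l', j', hle.trans (Nat.sub_le j (r l)), hlt', ?_⟩
        have heq : (⇑h)^[j - r l] ((⇑h)^[r l] y) = (⇑h)^[j] y := by
          rw [← Function.iterate_add_apply, Nat.sub_add_cancel hjr]
        rwa [heq] at hmem
  have hdisj : ∀ l l' : Fin (m + 1), ∀ j j' : ℕ, j < r l → j' < r l' → (l, j) ≠ (l', j') →
      j ≤ j' → Disjoint ((⇑h)^[j] '' T0 l) ((⇑h)^[j'] '' T0 l') := by
    intro l l' j j' hj hj' hne hle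
    rw [Set.disjoint_left]
    rintro x ⟨y, hy, rfl⟩ ⟨y', hy', heq⟩
    have hinj : Function.Injective ((⇑h)^[j]) := h.injective.iterate j
    have heq2 : (⇑h)^[j' - j] y' = y := by
      apply hinj
      rw [← Function.iterate_add_apply, Nat.add_sub_cancel' hle, heq]
    rcases Nat.eq_or_lt_of_le hle with hjj | hjj
    · subst hjj
      simp only [Nat.sub_self, Function.iterate_zero, id] at heq2
      subst heq2
      have hll : l ≠ l' := by
        intro e; exact hne (by rw [e])
      rcases lt_or_gt_of_ne hll with hlt | hlt
      · exact hy'.2 (Set.mem_iUnion.mpr ⟨l, Set.mem_iUnion.mpr ⟨hlt, hy.1⟩⟩)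
      · exact hy.2 (Set.mem_iUnion.mpr ⟨l', Set.mem_iUnion.mpr ⟨hlt, hy'.1⟩⟩)
    · have h1 : 1 ≤ j' - j := by omega
      have h2 : j' - j < r l' := by omega
      exact hfirst l' y' hy' (j' - j) h1 h2 (heq2 ▸ hT0Y l hy)
  constructor
  · intro n
    ext x
    simp only [Set.mem_iUnion, Set.mem_image]
    constructor
    · rintro ⟨j, hjn, y, hy, rfl⟩
      obtain ⟨l, j', hle, hlt, hmem⟩ := key j y hy
      obtain ⟨z, hz, hzeq⟩ := hmem
      exact ⟨l, j', lt_min (lt_of_le_of_lt hle hjn) hlt, z, hz, hzeq⟩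
    · rintro ⟨l, j, hj, y, hy, rfl⟩
      exact ⟨j, (lt_min_iff.mp hj).1, y, hT0Y l hy, rfl⟩
  · intro l l' j j' hj hj' hne
    rcases le_total j j' with hle | hle
    · exact hdisj l l' j j' hj hj' hne hle
    · exact (hdisj l' l j' j hj' hj hne.symm hle).symm
end

section
/- With the hypotheses of a Rokhlin system, for every x ∈ D_l := T_l ∩ ⋃_{j<l} T_j there exist t ≥ 1 and a sequence μ(1),…,μ(t) ∈ {0,…,l−1} with r_{μ(1)} + … + r_{μ(t)} = r_l such that h^{r_{μ(1)}+…+r_{μ(s−1)}}(x) ∈ T^0_{μ(s)} for each s = 1,…,t. In particular, D_l = ⋃_{μ ∈ 𝒮_l} T_{l,μ}, where 𝒮_l is the set of sequences μ in {0,…,l−1} with Σ_s r_{μ(s)} = r_l and T_{l,μ} = { x ∈ T_l : h^{r_{μ(1)}+…+r_{μ(s−1)}}(x) ∈ T_{μ(s)} for all s }. -/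
/-- Auxiliary lemma: any point of `Y` returning to `Y` at time `k` has its orbit
segment decomposed into first-return blocks. -/
theorem stmt_9_aux {X : Type*} [TopologicalSpace X] (h : X ≃ₜ X) (Y : Set X) (m : ℕ)
    (T : Fin (m + 1) → Set X) (r : Fin (m + 1) → ℕ)
    (hcover : (⋃ l, T l) = Y) (hrpos : ∀ l, 1 ≤ r l)
    (hret : ∀ l, (⇑h)^[r l] '' T l ⊆ Y)
    (hfirst : ∀ l : Fin (m + 1), ∀ y ∈ T l \ ⋃ j, ⋃ _ : j < l, T j,
      ∀ n, 1 ≤ n → n < r l → (⇑h)^[n] y ∉ Y) :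
    ∀ k, 1 ≤ k → ∀ y ∈ Y, (⇑h)^[k] y ∈ Y →
      ∃ t : ℕ, 1 ≤ t ∧ ∃ μ : ℕ → Fin (m + 1),
        (∑ s ∈ Finset.range t, r (μ s)) = k ∧
        ∀ s < t, (⇑h)^[∑ i ∈ Finset.range s, r (μ i)] y
          ∈ T (μ s) \ ⋃ j, ⋃ _ : j < μ s, T j := by
  classical
  intro k
  induction k using Nat.strong_induction_on with
  | _ k ih =>
    intro hk y hy hky
    -- find minimal j with y ∈ T j
    have hyU : y ∈ ⋃ l, T l := hcover ▸ hy
    obtain ⟨j0, hj0⟩ := Set.mem_iUnion.mp hyU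
    obtain ⟨j, hjmem, hjmin⟩ := Finset.exists_min_image
      (Finset.univ.filter (fun i => y ∈ T i)) id
      ⟨j0, Finset.mem_filter.mpr ⟨Finset.mem_univ _, hj0⟩⟩
    have hyTj : y ∈ T j := (Finset.mem_filter.mp hjmem).2
    have hjmin' : ∀ i, y ∈ T i → j ≤ i := fun i hi =>
      hjmin i (Finset.mem_filter.mpr ⟨Finset.mem_univ _, hi⟩)
    have hyT0 : y ∈ T j \ ⋃ i, ⋃ _ : i < j, T i := by
      refine ⟨hyTj, ?_⟩
      intro hmem
      obtain ⟨i, hi⟩ := Set.mem_iUnion.mp hmem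
      obtain ⟨hij, hyi⟩ := Set.mem_iUnion.mp hi
      exact absurd (hjmin' i hyi) (not_le.mpr hij)
    -- first return time of y is r j, so r j ≤ k
    have hrjk : r j ≤ k := by
      by_contra hlt
      exact hfirst j y hyT0 k hk (not_le.mp hlt) hky
    rcases eq_or_lt_of_le hrjk with heq | hlt
    · -- k = r j : one block
      refine ⟨1, le_refl 1, fun _ => j, ?_, ?_⟩
      · simpa using heq
      · intro s hs
        interval_cases s
        simpa using hyT0
    · -- recurse on k - r j
      obtain ⟨k', rfl⟩ : ∃ k', k = k' + r j := ⟨k - r j, by omega⟩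
      have hk'pos : 1 ≤ k' := by omega
      have hy'Y : (⇑h)^[r j] y ∈ Y := hret j ⟨y, hyTj, rfl⟩
      have hy'ret : (⇑h)^[k'] ((⇑h)^[r j] y) ∈ Y := by
        rw [← Function.iterate_add_apply]; exact hky
      obtain ⟨t', ht'1, μ', hsum', hmem'⟩ := ih k' (by have := hrpos j; omega) hk'pos _ hy'Y hy'ret
      refine ⟨t' + 1, by omega, fun s => if s = 0 then j else μ' (s - 1), ?_, ?_⟩
      · rw [Finset.sum_range_succ']
        simp only [Nat.succ_ne_zero, if_false, if_true, reduceIte, Nat.add_sub_cancel]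
        omega
      · intro s hs
        cases s with
        | zero => simpa using hyT0
        | succ s' =>
          have hs' : s' < t' := by omega
          have hsum : (∑ i ∈ Finset.range (s' + 1),
              r (if i = 0 then j else μ' (i - 1)))
              = (∑ i ∈ Finset.range s', r (μ' i)) + r j := by
            rw [Finset.sum_range_succ']
            simp
          rw [hsum]
          simp only [Nat.succ_ne_zero, if_false, Nat.add_sub_cancel]
          rw [Function.iterate_add_apply]
          exact hmem' s' hs'

/-- A statement about a Rokhlin system of towers for `(X, h, Y)`. -/
theorem stmt_9 {X : Type*} [MetricSpace X] [CompactSpace X] (h : X ≃ₜ X)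
    (Y : Set X) (hYne : Y.Nonempty) (hYcomp : IsCompact Y)
    (hYrec : Y ⊆ closure (⋃ n : ℕ, ⋃ _ : 1 ≤ n, (⇑h)^[n] '' Y))
    (m : ℕ) (T : Fin (m + 1) → Set X) (r : Fin (m + 1) → ℕ)
    (hTne : ∀ l, (T l).Nonempty) (hTcomp : ∀ l, IsCompact (T l))
    (hTY : ∀ l, T l ⊆ Y) (hcover : (⋃ l, T l) = Y)
    (hrpos : ∀ l, 1 ≤ r l) (hrmono : Monotone r)
    (hret : ∀ l, (⇑h)^[r l] '' T l ⊆ Y)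
    (hfirst : ∀ l : Fin (m + 1), ∀ y ∈ T l \ ⋃ j, ⋃ _ : j < l, T j,
      ∀ n, 1 ≤ n → n < r l → (⇑h)^[n] y ∉ Y)
    (hrealized : ∀ l, ∃ y ∈ Y, (⇑h)^[r l] y ∈ Y ∧
      ∀ n, 1 ≤ n → n < r l → (⇑h)^[n] y ∉ Y) :
    ∀ l : Fin (m + 1),
      (∀ x ∈ T l ∩ ⋃ j, ⋃ _ : j < l, T j,
        ∃ t : ℕ, 1 ≤ t ∧ ∃ μ : ℕ → Fin (m + 1),
          (∀ s < t, μ s < l) ∧ (∑ s ∈ Finset.range t, r (μ s)) = r l ∧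
          ∀ s < t, (⇑h)^[∑ i ∈ Finset.range s, r (μ i)] x
            ∈ T (μ s) \ ⋃ j, ⋃ _ : j < μ s, T j) ∧
      (T l ∩ ⋃ j, ⋃ _ : j < l, T j)
        = ⋃ t : ℕ, ⋃ μ : ℕ → Fin (m + 1),
            ⋃ _ : (∀ s < t, μ s < l) ∧ (∑ s ∈ Finset.range t, r (μ s)) = r l,
            {x ∈ T l | ∀ s < t,
              (⇑h)^[∑ i ∈ Finset.range s, r (μ i)] x ∈ T (μ s)} := by
  intro l
  have main : ∀ x ∈ T l ∩ ⋃ j, ⋃ _ : j < l, T j,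
      ∃ t : ℕ, 1 ≤ t ∧ ∃ μ : ℕ → Fin (m + 1),
        (∀ s < t, μ s < l) ∧ (∑ s ∈ Finset.range t, r (μ s)) = r l ∧
        ∀ s < t, (⇑h)^[∑ i ∈ Finset.range s, r (μ i)] x
          ∈ T (μ s) \ ⋃ j, ⋃ _ : j < μ s, T j := by
    intro x hx
    obtain ⟨hxT, hxU⟩ := hx
    have hxY : x ∈ Y := hTY l hxT
    have hret' : (⇑h)^[r l] x ∈ Y := hret l ⟨x, hxT, rfl⟩
    obtain ⟨t, ht1, μ, hsum, hmem⟩ := stmt_9_aux h Y m T r hcover hrpos hret hfirst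
      (r l) (hrpos l) x hxY hret'
    refine ⟨t, ht1, μ, ?_, hsum, hmem⟩
    intro s hs
    by_contra hge
    have hle : (l : Fin (m + 1)) ≤ μ s := not_lt.mp hge
    cases Nat.eq_zero_or_pos s with
    | inl h0 =>
      subst h0
      have hx0 := hmem 0 ht1
      simp only [Finset.range_zero, Finset.sum_empty, Function.iterate_zero_apply] at hx0
      obtain ⟨i, hi⟩ := Set.mem_iUnion.mp hxU
      obtain ⟨hil, hxi⟩ := Set.mem_iUnion.mp hi
      exact hx0.2 (Set.mem_iUnion.mpr ⟨i, Set.mem_iUnion.mpr ⟨lt_of_lt_of_le hil hle, hxi⟩⟩)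
    | inr hspos =>
      -- partial sum up to s is ≥ r (μ 0) ≥ 1 and partial sum + r (μ s) ≤ r l
      have hsub : Finset.range (s + 1) ⊆ Finset.range t := by
        intro i hi
        simp only [Finset.mem_range] at *
        omega
      have hbound : (∑ i ∈ Finset.range (s + 1), r (μ i)) ≤ r l := by
        rw [← hsum]
        exact Finset.sum_le_sum_of_subset hsub
      have hterm0 : 1 ≤ r (μ 0) := hrpos _
      have h2 : r (μ 0) ≤ ∑ i ∈ Finset.range s, r (μ i) :=
        Finset.single_le_sum (f := fun i => r (μ i)) (fun i _ => Nat.zero_le _)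
          (Finset.mem_range.mpr hspos)
      rw [Finset.sum_range_succ] at hbound
      have : r (μ s) < r l := by omega
      exact absurd (hrmono hle) (not_le.mpr this)
  refine ⟨main, ?_⟩
  ext x
  constructor
  · intro hx
    obtain ⟨t, ht1, μ, hμl, hsum, hmem⟩ := main x hx
    refine Set.mem_iUnion.mpr ⟨t, Set.mem_iUnion.mpr ⟨μ, Set.mem_iUnion.mpr
      ⟨⟨hμl, hsum⟩, hx.1, fun s hs => (hmem s hs).1⟩⟩⟩
  · intro hx
    obtain ⟨t, hx⟩ := Set.mem_iUnion.mp hx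
    obtain ⟨μ, hx⟩ := Set.mem_iUnion.mp hx
    obtain ⟨⟨hμl, hsum⟩, hxT, hmem⟩ := Set.mem_iUnion.mp hx
    have ht : 1 ≤ t := by
      by_contra h0
      have : t = 0 := by omega
      subst this
      simp at hsum
      have := hrpos l
      omega
    refine ⟨hxT, ?_⟩
    have h0 := hmem 0 ht
    simp only [Finset.range_zero, Finset.sum_empty, Function.iterate_zero_apply] at h0
    exact Set.mem_iUnion.mpr ⟨μ 0, Set.mem_iUnion.mpr ⟨hμl 0 ht, h0⟩⟩
end

section
/- With the hypotheses of a Rokhlin system, let X_l = ⋃_{i=0}^{l} ⋃_{j=0}^{r_i−1} h^j(T_i). Then X_l equals the disjoint union of the sets h^j(T_i^0) for 0 ≤ i ≤ l and 0 ≤ j ≤ r_i − 1. -/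
/-- A statement about a Rokhlin system of towers for `(X, h, Y)`. -/
theorem stmt_10 {X : Type*} [MetricSpace X] [CompactSpace X] (h : X ≃ₜ X)
    (Y : Set X) (hYne : Y.Nonempty) (hYcomp : IsCompact Y)
    (hYrec : Y ⊆ closure (⋃ n : ℕ, ⋃ _ : 1 ≤ n, (⇑h)^[n] '' Y))
    (m : ℕ) (T : Fin (m + 1) → Set X) (r : Fin (m + 1) → ℕ)
    (hTne : ∀ l, (T l).Nonempty) (hTcomp : ∀ l, IsCompact (T l))
    (hTY : ∀ l, T l ⊆ Y) (hcover : (⋃ l, T l) = Y)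
    (hrpos : ∀ l, 1 ≤ r l) (hrmono : Monotone r)
    (hret : ∀ l, (⇑h)^[r l] '' T l ⊆ Y)
    (hfirst : ∀ l : Fin (m + 1), ∀ y ∈ T l \ ⋃ j, ⋃ _ : j < l, T j,
      ∀ n, 1 ≤ n → n < r l → (⇑h)^[n] y ∉ Y)
    (hrealized : ∀ l, ∃ y ∈ Y, (⇑h)^[r l] y ∈ Y ∧
      ∀ n, 1 ≤ n → n < r l → (⇑h)^[n] y ∉ Y) :
    ∀ l : Fin (m + 1),
      ((⋃ i, ⋃ _ : i ≤ l, ⋃ j : ℕ, ⋃ _ : j < r i, (⇑h)^[j] '' T i)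
        = ⋃ i, ⋃ _ : i ≤ l, ⋃ j : ℕ, ⋃ _ : j < r i,
            (⇑h)^[j] '' (T i \ ⋃ i', ⋃ _ : i' < i, T i')) ∧
      ∀ i i' : Fin (m + 1), i ≤ l → i' ≤ l → ∀ j j' : ℕ, j < r i → j' < r i' →
        (i, j) ≠ (i', j') →
        Disjoint ((⇑h)^[j] '' (T i \ ⋃ k, ⋃ _ : k < i, T k))
          ((⇑h)^[j'] '' (T i' \ ⋃ k, ⋃ _ : k < i', T k)) := by
  intro l
  have hinj : ∀ j : ℕ, Function.Injective ((⇑h)^[j]) :=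
    fun j => Function.Injective.iterate h.injective j
  have hM : ∀ (i : Fin (m+1)) (y : X),
      y ∈ T i \ ⋃ k, ⋃ _ : k < i, T k ↔ y ∈ T i ∧ ∀ k' < i, y ∉ T k' := by
    intro i y
    simp only [Set.mem_diff, Set.mem_iUnion, not_exists]
  -- every point of Y has a minimal tower index
  have hmin : ∀ y ∈ Y, ∃ k : Fin (m+1), y ∈ T k ∧ ∀ k' < k, y ∉ T k' := by
    intro y hy
    rw [← hcover] at hy
    obtain ⟨k, hk⟩ := Set.mem_iUnion.mp hy
    obtain ⟨k0, hk0mem, hk0min⟩ :=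
      (wellFounded_lt (α := Fin (m+1))).has_min {k | y ∈ T k} ⟨k, hk⟩
    exact ⟨k0, hk0mem, fun k' hlt hk' => hk0min k' hk' hlt⟩
  have heq : ∀ (q s : ℕ) (y : X), (⇑h)^[q] ((⇑h)^[s] y) = (⇑h)^[q + s] y := by
    intro q s y; rw [Function.iterate_add_apply]
  -- key claim, by strong induction on p
  have C : ∀ p : ℕ, ∀ y ∈ Y, (⇑h)^[p] y ∈ Y → p < r l → ∀ j < p,
      ∃ k : Fin (m+1), k ≤ l ∧ ∃ t, t < r k ∧ ∃ z,
        (z ∈ T k ∧ ∀ k' < k, z ∉ T k') ∧ (⇑h)^[t] z = (⇑h)^[j] y := by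
    intro p
    induction p using Nat.strong_induction_on with
    | _ p IH =>
      intro y hy hpy hpl j hjp
      obtain ⟨k0, hk0T, hk0min⟩ := hmin y hy
      have hp1 : 1 ≤ p := by omega
      have hrk0p : r k0 ≤ p := by
        by_contra hcon
        push_neg at hcon
        exact hfirst k0 y ((hM k0 y).mpr ⟨hk0T, hk0min⟩) p hp1 hcon hpy
      have hk0l : k0 ≤ l := by
        by_contra hcon
        push_neg at hcon
        have := hrmono hcon.le
        omega
      by_cases hjk : j < r k0
      · exact ⟨k0, hk0l, j, hjk, y, ⟨hk0T, hk0min⟩, rfl⟩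
      · push_neg at hjk
        have hy' : (⇑h)^[r k0] y ∈ Y := hret k0 ⟨y, hk0T, rfl⟩
        have hrk0pos := hrpos k0
        have h1 : (⇑h)^[p - r k0] ((⇑h)^[r k0] y) ∈ Y := by
          rw [heq, Nat.sub_add_cancel hrk0p]; exact hpy
        obtain ⟨k, hkl, t, htk, z, hz, hzeq⟩ :=
          IH (p - r k0) (by omega) _ hy' h1 (by omega) (j - r k0) (by omega)
        refine ⟨k, hkl, t, htk, z, hz, ?_⟩
        rw [hzeq, heq, Nat.sub_add_cancel hjk]
  constructor
  · ext x
    simp only [Set.mem_iUnion, Set.mem_image]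
    constructor
    · rintro ⟨i, hil, j, hji, y, hyT, rfl⟩
      obtain ⟨k0, hk0T, hk0min⟩ := hmin y (hTY i hyT)
      have hk0i : k0 ≤ i := by
        by_contra hcon
        push_neg at hcon
        exact hk0min i hcon hyT
      by_cases hjk : j < r k0
      · exact ⟨k0, le_trans hk0i hil, j, hjk, y, (hM k0 y).mpr ⟨hk0T, hk0min⟩, rfl⟩
      · push_neg at hjk
        have hy' : (⇑h)^[r k0] y ∈ Y := hret k0 ⟨y, hk0T, rfl⟩
        have hril : r i ≤ r l := hrmono hil
        have hrk0pos := hrpos k0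
        have hripos := hrpos i
        have hpy : (⇑h)^[r i - r k0] ((⇑h)^[r k0] y) ∈ Y := by
          rw [heq, Nat.sub_add_cancel (by omega)]
          exact hret i ⟨y, hyT, rfl⟩
        obtain ⟨k, hkl, t, htk, z, hz, hzeq⟩ :=
          C (r i - r k0) _ hy' hpy (by omega) (j - r k0) (by omega)
        refine ⟨k, hkl, t, htk, z, (hM k z).mpr hz, ?_⟩
        rw [hzeq, heq, Nat.sub_add_cancel hjk]
    · rintro ⟨i, hil, j, hji, y, hyT, rfl⟩
      exact ⟨i, hil, j, hji, y, ((hM i y).mp hyT).1, rfl⟩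
  · intro i i' hil hi'l j j' hji hji' hne
    rw [Set.disjoint_left]
    rintro x ⟨y, hy, rfl⟩ ⟨y', hy', hxy⟩
    rw [hM] at hy hy'
    -- hxy : (⇑h)^[j'] y' = (⇑h)^[j] y
    rcases lt_trichotomy j j' with hlt | heqj | hgt
    · have hkey : (⇑h)^[j' - j] y' = y := by
        apply hinj j
        rw [heq, Nat.add_sub_cancel' hlt.le, hxy]
      have : (⇑h)^[j' - j] y' ∉ Y :=
        hfirst i' y' ((hM i' y').mpr hy') (j' - j) (by omega) (by omega)
      exact this (hkey ▸ hTY i hy.1)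
    · subst heqj
      have hyy : y' = y := hinj j hxy
      subst hyy
      rcases lt_trichotomy i i' with hii | hii | hii
      · exact hy'.2 i hii hy.1
      · exact hne (by rw [hii])
      · exact hy.2 i' hii hy'.1
    · have hkey : (⇑h)^[j - j'] y = y' := by
        apply hinj j'
        rw [heq, Nat.add_sub_cancel' hgt.le, ← hxy]
      have : (⇑h)^[j - j'] y ∉ Y :=
        hfirst i y ((hM i y).mpr hy) (j - j') (by omega) (by omega)
      exact this (hkey ▸ hTY i' hy'.1)
end

section
/- With the hypotheses of a Rokhlin system, if j₁ ≠ j₂ are in {0,…,r_l−1}, then h^{j₁}(T_l) ∩ h^{j₂}(T_l) ⊆ X_{l−1}, where X_{l−1} = ⋃_{i=0}^{l−1} ⋃_{j=0}^{r_i−1} h^j(T_i). Moreover h^{j₁}(T_l) ∩ h^{j₂}(T_l^0) = ∅. -/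
/-- A statement about a Rokhlin system of towers for `(X, h, Y)`. -/
theorem stmt_11 {X : Type*} [MetricSpace X] [CompactSpace X] (h : X ≃ₜ X)
    (Y : Set X) (hYne : Y.Nonempty) (hYcomp : IsCompact Y)
    (hYrec : Y ⊆ closure (⋃ n : ℕ, ⋃ _ : 1 ≤ n, (⇑h)^[n] '' Y))
    (m : ℕ) (T : Fin (m + 1) → Set X) (r : Fin (m + 1) → ℕ)
    (hTne : ∀ l, (T l).Nonempty) (hTcomp : ∀ l, IsCompact (T l))
    (hTY : ∀ l, T l ⊆ Y) (hcover : (⋃ l, T l) = Y)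
    (hrpos : ∀ l, 1 ≤ r l) (hrmono : Monotone r)
    (hret : ∀ l, (⇑h)^[r l] '' T l ⊆ Y)
    (hfirst : ∀ l : Fin (m + 1), ∀ y ∈ T l \ ⋃ j, ⋃ _ : j < l, T j,
      ∀ n, 1 ≤ n → n < r l → (⇑h)^[n] y ∉ Y)
    (hrealized : ∀ l, ∃ y ∈ Y, (⇑h)^[r l] y ∈ Y ∧
      ∀ n, 1 ≤ n → n < r l → (⇑h)^[n] y ∉ Y) :
    ∀ l : Fin (m + 1), ∀ j₁ j₂ : ℕ, j₁ < r l → j₂ < r l → j₁ ≠ j₂ →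
      ((⇑h)^[j₁] '' T l) ∩ ((⇑h)^[j₂] '' T l)
        ⊆ (⋃ i, ⋃ _ : i < l, ⋃ j : ℕ, ⋃ _ : j < r i, (⇑h)^[j] '' T i) ∧
      Disjoint ((⇑h)^[j₁] '' T l)
        ((⇑h)^[j₂] '' (T l \ ⋃ i, ⋃ _ : i < l, T i)) := by
  intro l j₁ j₂ hj₁ hj₂ hne
  have hinj : Function.Injective (⇑h) := h.injective
  -- key disjointness fact (part 2, both orders)
  have key2 : ∀ k₁ k₂ : ℕ, k₁ < r l → k₂ < r l → k₁ ≠ k₂ →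
      ∀ y₁ ∈ T l, ∀ y₂ ∈ T l \ ⋃ i, ⋃ _ : i < l, T i,
      (⇑h)^[k₁] y₁ ≠ (⇑h)^[k₂] y₂ := by
    intro k₁ k₂ hk₁ hk₂ hkne y₁ hy₁ y₂ hy₂ heq
    rcases lt_or_gt_of_ne hkne with hlt | hlt
    · -- k₁ < k₂ : y₁ = h^[k₂-k₁] y₂ ∈ Y contradicts first return of y₂
      have e1 : (⇑h)^[k₂ - k₁] y₂ = y₁ := by
        apply Function.Injective.iterate hinj k₁
        rw [← Function.iterate_add_apply, Nat.add_sub_cancel' hlt.le, ← heq]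
      have := hfirst l y₂ hy₂ (k₂ - k₁) (by omega) (by omega)
      rw [e1] at this
      exact this (hTY l hy₁)
    · -- k₂ < k₁ : y₂ = h^[k₁-k₂] y₁, so h^[r l] y₁ = h^[r l-(k₁-k₂)] y₂ ∈ Y
      have e1 : (⇑h)^[k₁ - k₂] y₁ = y₂ := by
        apply Function.Injective.iterate hinj k₂
        rw [← Function.iterate_add_apply, Nat.add_sub_cancel' hlt.le, heq]
      have e2 : (⇑h)^[r l - (k₁ - k₂)] y₂ = (⇑h)^[r l] y₁ := by
        rw [← e1, ← Function.iterate_add_apply]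
        congr 1
        omega
      have := hfirst l y₂ hy₂ (r l - (k₁ - k₂)) (by omega) (by omega)
      rw [e2] at this
      exact this (hret l ⟨y₁, hy₁, rfl⟩)
  -- main subset fact for ordered indices
  have main : ∀ ja jb : ℕ, ja < jb → jb < r l → ∀ ya ∈ T l, ∀ yb ∈ T l,
      (⇑h)^[ja] ya = (⇑h)^[jb] yb →
      (⇑h)^[ja] ya ∈ (⋃ i, ⋃ _ : i < l, ⋃ j : ℕ, ⋃ _ : j < r i, (⇑h)^[j] '' T i) := by
    intro ja jb hab hjb ya hya yb hyb e
    -- Claim C : every Y-visit at offset o ≤ jb belongs to some tower of index < l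
    have claimC : ∀ o : ℕ, o ≤ jb → ∀ v ∈ Y, (⇑h)^[o] v = (⇑h)^[ja] ya →
        ∃ i : Fin (m + 1), i < l ∧ v ∈ T i := by
      intro o ho v hv hvx
      by_contra hcon
      push_neg at hcon
      have hv' : v ∈ ⋃ i, T i := hcover ▸ hv
      obtain ⟨i₀, hi₀⟩ := Set.mem_iUnion.mp hv'
      have hex : ∃ n : ℕ, ∃ hn : n < m + 1, v ∈ T ⟨n, hn⟩ :=
        ⟨i₀.1, i₀.2, by simpa [Fin.eta] using hi₀⟩
      classical
      set k := Nat.find hex with hk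
      obtain ⟨hkm, hvk⟩ := Nat.find_spec hex
      set i : Fin (m + 1) := ⟨k, hkm⟩ with hidef
      have hmin : ∀ j : Fin (m + 1), j < i → v ∉ T j := by
        intro j hj hvj
        exact Nat.find_min hex (by exact_mod_cast hj) ⟨j.2, by simpa [Fin.eta] using hvj⟩
      have hv0 : v ∈ T i \ ⋃ j, ⋃ _ : j < i, T j := by
        refine ⟨hvk, ?_⟩
        simp only [Set.mem_iUnion, not_exists]
        intro j hj
        exact hmin j hj
      have hli : l ≤ i := le_of_not_gt fun hlt => hcon i hlt hvk
      have hrle : r l ≤ r i := hrmono hli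
      rcases lt_trichotomy o ja with hoa | hoa | hoa
      · -- o < ja : h^[r l - ja + o] v = h^[r l] ya ∈ Y
        have e2 : (⇑h)^[r l - ja + o] v = (⇑h)^[r l] ya := by
          rw [Function.iterate_add_apply, hvx, ← Function.iterate_add_apply]
          congr 1
          omega
        have := hfirst i v hv0 (r l - ja + o) (by omega) (by omega)
        rw [e2] at this
        exact this (hret l ⟨ya, hya, rfl⟩)
      · -- o = ja : v = ya, so ya is in a base T_i with l ≤ i; forces i = l, contradiction with key2
        have hva : v = ya := by
          apply Function.Injective.iterate hinj ja
          rw [← hoa] at hvx ⊢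
          exact hvx
        have hil : i = l := le_antisymm (le_of_not_gt fun hlt =>
          hmin l hlt (hva ▸ hya)) hli
        have hv0' : ya ∈ T l \ ⋃ j, ⋃ _ : j < l, T j := by
          rw [← hva, ← hil]
          exact hv0
        exact key2 jb ja hjb (hab.trans hjb) (Ne.symm hab.ne) yb hyb ya hv0' e.symm
      · -- ja < o : h^[o - ja] v = ya ∈ Y
        have e2 : (⇑h)^[o - ja] v = ya := by
          apply Function.Injective.iterate hinj ja
          rw [← Function.iterate_add_apply, Nat.add_sub_cancel' hoa.le, hvx]
        have := hfirst i v hv0 (o - ja) (by omega) (by omega)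
        rw [e2] at this
        exact this (hTY l (e2 ▸ hya))
    -- Claim D : descend along the orbit
    have claimD : ∀ o : ℕ, o ≤ jb → ∀ v ∈ Y, (⇑h)^[o] v = (⇑h)^[ja] ya →
        (⇑h)^[ja] ya ∈ (⋃ i, ⋃ _ : i < l, ⋃ j : ℕ, ⋃ _ : j < r i, (⇑h)^[j] '' T i) := by
      intro o
      induction o using Nat.strong_induction_on with
      | _ o ih =>
        intro ho v hv hvx
        obtain ⟨i, hil, hvTi⟩ := claimC o ho v hv hvx
        by_cases hor : o < r i
        · rw [← hvx]
          refine Set.mem_iUnion.mpr ⟨i, Set.mem_iUnion.mpr ⟨hil, Set.mem_iUnion.mpr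
            ⟨o, Set.mem_iUnion.mpr ⟨hor, ⟨v, hvTi, rfl⟩⟩⟩⟩⟩
        · push_neg at hor
          have hri := hrpos i
          refine ih (o - r i) (by omega) (by omega) ((⇑h)^[r i] v)
            (hret i ⟨v, hvTi, rfl⟩) ?_
          rw [← Function.iterate_add_apply, Nat.sub_add_cancel hor, hvx]
    exact claimD jb le_rfl yb (hTY l hyb) e.symm
  constructor
  · rintro a ⟨⟨y₁, hy₁, e₁⟩, ⟨y₂, hy₂, e₂⟩⟩
    rcases lt_or_gt_of_ne hne with hlt | hlt
    · rw [← e₁]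
      exact main j₁ j₂ hlt hj₂ y₁ hy₁ y₂ hy₂ (e₁.trans e₂.symm)
    · rw [← e₂]
      exact main j₂ j₁ hlt hj₁ y₂ hy₂ y₁ hy₁ (e₂.trans e₁.symm)
  · rw [Set.disjoint_left]
    rintro a ⟨y₁, hy₁, e₁⟩ ⟨y₂, hy₂, e₂⟩
    exact key2 j₁ j₂ hj₁ hj₂ hne y₁ hy₁ y₂ hy₂ (e₁.trans e₂.symm)
end

section
/- With the hypotheses of a Rokhlin system, for each l, D_l = T_l ∩ X_{l−1}, where D_l = T_l ∩ ⋃_{j<l} T_j and X_{l−1} = ⋃_{i=0}^{l−1} ⋃_{j=0}^{r_i−1} h^j(T_i). More generally, if x ∈ T_l and h^j(x) ∈ X_{l−1} for some 0 ≤ j ≤ r_l−1, then x ∈ D_l. -/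
/-- A statement about a Rokhlin system of towers for `(X, h, Y)`. -/
theorem stmt_12 {X : Type*} [MetricSpace X] [CompactSpace X] (h : X ≃ₜ X)
    (Y : Set X) (hYne : Y.Nonempty) (hYcomp : IsCompact Y)
    (hYrec : Y ⊆ closure (⋃ n : ℕ, ⋃ _ : 1 ≤ n, (⇑h)^[n] '' Y))
    (m : ℕ) (T : Fin (m + 1) → Set X) (r : Fin (m + 1) → ℕ)
    (hTne : ∀ l, (T l).Nonempty) (hTcomp : ∀ l, IsCompact (T l))
    (hTY : ∀ l, T l ⊆ Y) (hcover : (⋃ l, T l) = Y)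
    (hrpos : ∀ l, 1 ≤ r l) (hrmono : Monotone r)
    (hret : ∀ l, (⇑h)^[r l] '' T l ⊆ Y)
    (hfirst : ∀ l : Fin (m + 1), ∀ y ∈ T l \ ⋃ j, ⋃ _ : j < l, T j,
      ∀ n, 1 ≤ n → n < r l → (⇑h)^[n] y ∉ Y)
    (hrealized : ∀ l, ∃ y ∈ Y, (⇑h)^[r l] y ∈ Y ∧
      ∀ n, 1 ≤ n → n < r l → (⇑h)^[n] y ∉ Y) :
    ∀ l : Fin (m + 1),
      (T l ∩ ⋃ j, ⋃ _ : j < l, T j)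
        = T l ∩ (⋃ i, ⋃ _ : i < l, ⋃ j : ℕ, ⋃ _ : j < r i, (⇑h)^[j] '' T i) ∧
      ∀ x ∈ T l, ∀ j : ℕ, j < r l →
        (⇑h)^[j] x ∈ (⋃ i, ⋃ _ : i < l, ⋃ j' : ℕ, ⋃ _ : j' < r i, (⇑h)^[j'] '' T i) →
        x ∈ T l ∩ ⋃ i, ⋃ _ : i < l, T i := by
  intro l
  have key : ∀ x ∈ T l, ∀ j : ℕ, j < r l →
      (⇑h)^[j] x ∈ (⋃ i, ⋃ _ : i < l, ⋃ j' : ℕ, ⋃ _ : j' < r i, (⇑h)^[j'] '' T i) →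
      x ∈ T l ∩ ⋃ i, ⋃ _ : i < l, T i := by
    intro x hx j hj hmem
    refine ⟨hx, ?_⟩
    by_contra hxD
    simp only [Set.mem_iUnion] at hxD hmem
    push_neg at hxD
    obtain ⟨i, hil, j', hj', y, hy, hyx⟩ := hmem
    have hxdiff : x ∈ T l \ ⋃ k, ⋃ _ : k < l, T k := by
      refine ⟨hx, ?_⟩
      simp only [Set.mem_iUnion]
      push_neg
      exact hxD
    have hfirst' := hfirst l x hxdiff
    rcases le_or_gt j' j with hle | hlt
    · have hxy : (⇑h)^[j - j'] x = y := by
        have hinj : Function.Injective (⇑h)^[j'] := h.injective.iterate j'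
        apply hinj
        rw [← Function.iterate_add_apply, show j' + (j - j') = j from by omega]
        exact hyx.symm
      rcases eq_or_lt_of_le hle with heq | hlt2
      · have hxy0 : x = y := by
          have : j - j' = 0 := by omega
          simpa [this] using hxy
        exact hxD i hil (hxy0 ▸ hy)
      · exact hfirst' (j - j') (by omega) (by omega) (hxy ▸ hTY i hy)
    · have hYri : (⇑h)^[r i] y ∈ Y := hret i ⟨y, hy, rfl⟩
      have heq : (⇑h)^[r i] y = (⇑h)^[r i - j' + j] x :=
        calc (⇑h)^[r i] y = (⇑h)^[r i - j'] ((⇑h)^[j'] y) := by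
              rw [← Function.iterate_add_apply]; congr 1; omega
          _ = (⇑h)^[r i - j'] ((⇑h)^[j] x) := by rw [hyx]
          _ = (⇑h)^[r i - j' + j] x := by
              rw [← Function.iterate_add_apply]
      have hril : r i ≤ r l := hrmono hil.le
      exact hfirst' (r i - j' + j) (by omega) (by omega) (heq ▸ hYri)
  refine ⟨?_, key⟩
  ext x
  simp only [Set.mem_inter_iff, Set.mem_iUnion]
  constructor
  · rintro ⟨hx, i, hil, hxi⟩
    exact ⟨hx, i, hil, 0, hrpos i, x, hxi, rfl⟩
  · rintro ⟨hx, i, hil, j', hj', y, hy, hyx⟩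
    have := key x hx 0 (hrpos l)
      (by simp only [Set.mem_iUnion]
          exact ⟨i, hil, j', hj', y, hy, by simpa using hyx⟩)
    simpa [Set.mem_iUnion] using this
end

section
/- Let X be compact Hausdorff, h : X → X a minimal homeomorphism, and Y ⊆ X closed with nonempty interior. For each value r in the range of the first return time function r_Y, set T_r = { y ∈ Y : h^r(y) ∈ Y }. Then r_Y has finite range, the sets T_r are compact, ⋃_r T_r = Y, h^r(T_r) ⊆ Y, and for each r the set { y ∈ Y : r_Y(y) = r } equals T_r \ ⋃_{r' < r, r' in range} T_{r'}. -/
/-!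
By minimality every orbit meets the open set `interior Y`, so the translates `h⁻ⁿ (interior Y)`,
`n ∈ ℤ`, cover `X`; a finite subcover with `|n| ≤ N` shows that every point enters `Y` within
`2N + 1` forward steps. Hence the first return time is bounded, so it has finite range, and the
remaining claims are properties of the least element of `{n ≥ 1 | hⁿ y ∈ Y}`.
-/

open Set

namespace Homeomorph

variable {X : Type*} [TopologicalSpace X]

theorem toEquiv_zpow (h : X ≃ₜ X) (n : ℤ) : (h ^ n).toEquiv = h.toEquiv ^ n :=
  map_zpow ({ toFun := Homeomorph.toEquiv, map_one' := rfl, map_mul' := fun _ _ => rfl } :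
    (X ≃ₜ X) →* Equiv.Perm X) h n

theorem continuous_toEquiv_zpow (h : X ≃ₜ X) (n : ℤ) : Continuous ⇑(h.toEquiv ^ n) := by
  rw [← toEquiv_zpow]
  exact (h ^ n).continuous

theorem iterate_eq_toEquiv_zpow (h : X ≃ₜ X) (k : ℕ) : (⇑h)^[k] = ⇑(h.toEquiv ^ (k : ℤ)) := by
  rw [zpow_natCast]
  rfl

theorem exists_iterate_mem_of_dense_orbits [CompactSpace X] (h : X ≃ₜ X)
    (hmin : ∀ x : X, Dense (range fun n : ℤ => (h.toEquiv ^ n) x))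
    {U : Set X} (hU : IsOpen U) (hne : U.Nonempty) :
    ∃ B : ℕ, ∀ x : X, ∃ k ∈ Icc 1 B, (⇑h)^[k] x ∈ U := by
  have hcover : univ ⊆ ⋃ n : ℤ, ⇑(h.toEquiv ^ n) ⁻¹' U := fun x _ => by
    obtain ⟨_, ⟨n, rfl⟩, hn⟩ := (hmin x).exists_mem_open hU hne
    exact mem_iUnion.2 ⟨n, hn⟩
  obtain ⟨t, ht⟩ := isCompact_univ.elim_finite_subcover _
    (fun n => hU.preimage (h.continuous_toEquiv_zpow n)) hcover
  set N := t.sup Int.natAbs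
  refine ⟨2 * N + 1, fun x => ?_⟩
  obtain ⟨n, hnt, hn⟩ := mem_iUnion₂.1 (ht (mem_univ ((⇑h)^[N + 1] x)))
  have hnN : n.natAbs ≤ N := Finset.le_sup hnt
  have hk : (((n + (N + 1 : ℕ)).toNat : ℕ) : ℤ) = n + (N + 1 : ℕ) := by omega
  refine ⟨(n + (N + 1 : ℕ)).toNat, ⟨by omega, by omega⟩, ?_⟩
  rw [iterate_eq_toEquiv_zpow, hk, zpow_add, Equiv.Perm.mul_apply, ← iterate_eq_toEquiv_zpow]
  exact hn

end Homeomorph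

section ReturnTime

variable {α : Type*} (f : α → α) (Y : Set α)

noncomputable def returnTime (x : α) : ℕ := sInf {n : ℕ | 1 ≤ n ∧ f^[n] x ∈ Y}

variable {f Y}

theorem returnTime_le {x : α} {n : ℕ} (hn : 1 ≤ n) (hx : f^[n] x ∈ Y) : returnTime f Y x ≤ n :=
  Nat.sInf_le ⟨hn, hx⟩

theorem one_le_returnTime {x : α} (hx : ∃ n, 1 ≤ n ∧ f^[n] x ∈ Y) : 1 ≤ returnTime f Y x :=
  (Nat.sInf_mem hx).1

theorem iterate_returnTime_mem {x : α} (hx : ∃ n, 1 ≤ n ∧ f^[n] x ∈ Y) :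
    f^[returnTime f Y x] x ∈ Y :=
  (Nat.sInf_mem hx).2

theorem biUnion_returnTime_image (hret : ∀ y ∈ Y, ∃ n, 1 ≤ n ∧ f^[n] y ∈ Y) :
    ⋃ ρ ∈ returnTime f Y '' Y, {y ∈ Y | f^[ρ] y ∈ Y} = Y := by
  refine Subset.antisymm (iUnion₂_subset fun _ _ => sep_subset _ _) fun y hy => ?_
  exact mem_iUnion₂.2 ⟨_, mem_image_of_mem _ hy, hy, iterate_returnTime_mem (hret y hy)⟩

theorem setOf_returnTime_eq (hret : ∀ y ∈ Y, ∃ n, 1 ≤ n ∧ f^[n] y ∈ Y) {ρ : ℕ} (hρ : 1 ≤ ρ) :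
    {y ∈ Y | returnTime f Y y = ρ} = {y ∈ Y | f^[ρ] y ∈ Y} \
      ⋃ ρ' ∈ returnTime f Y '' Y, ⋃ _ : ρ' < ρ, {y ∈ Y | f^[ρ'] y ∈ Y} := by
  ext y
  simp only [mem_ofPred_eq, mem_sdiff, mem_iUnion, not_exists]
  constructor
  · rintro ⟨hy, rfl⟩
    refine ⟨⟨hy, iterate_returnTime_mem (hret y hy)⟩, ?_⟩
    rintro _ ⟨z, hz, rfl⟩ hlt ⟨-, hzy⟩
    exact hlt.not_ge (returnTime_le (one_le_returnTime (hret z hz)) hzy)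
  · rintro ⟨⟨hy, hρy⟩, hnot⟩
    refine ⟨hy, (returnTime_le hρ hρy).eq_or_lt.resolve_right fun hlt => ?_⟩
    exact hnot _ (mem_image_of_mem _ hy) hlt ⟨hy, iterate_returnTime_mem (hret y hy)⟩

end ReturnTime

theorem stmt_13_general {X : Type*} [TopologicalSpace X] [CompactSpace X]
    (h : X ≃ₜ X)
    (hmin : ∀ x : X, Dense (Set.range fun n : ℤ => (h.toEquiv ^ n) x))
    (Y : Set X) (hYclosed : IsClosed Y) (hYint : (interior Y).Nonempty)
    (rY : X → ℕ) (hrY : ∀ x, rY x = sInf {n : ℕ | 1 ≤ n ∧ (⇑h)^[n] x ∈ Y}) :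
    (rY '' Y).Finite ∧
      (∀ ρ ∈ rY '' Y, IsCompact {y ∈ Y | (⇑h)^[ρ] y ∈ Y}) ∧
      (⋃ ρ ∈ rY '' Y, {y ∈ Y | (⇑h)^[ρ] y ∈ Y}) = Y ∧
      (∀ ρ ∈ rY '' Y, (⇑h)^[ρ] '' {y ∈ Y | (⇑h)^[ρ] y ∈ Y} ⊆ Y) ∧
      (∀ ρ ∈ rY '' Y, {y ∈ Y | rY y = ρ}
        = {y ∈ Y | (⇑h)^[ρ] y ∈ Y} \
            ⋃ ρ' ∈ rY '' Y, ⋃ _ : ρ' < ρ, {y ∈ Y | (⇑h)^[ρ'] y ∈ Y}) := by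
  obtain rfl : rY = returnTime h Y := funext hrY
  obtain ⟨B, hB⟩ := h.exists_iterate_mem_of_dense_orbits hmin isOpen_interior hYint
  have hret : ∀ x, ∃ n, 1 ≤ n ∧ (⇑h)^[n] x ∈ Y := fun x =>
    let ⟨k, hk, hkY⟩ := hB x
    ⟨k, hk.1, interior_subset hkY⟩
  refine ⟨?_, fun ρ _ => ?_, biUnion_returnTime_image fun y _ => hret y,
    fun ρ _ => ?_, ?_⟩
  · refine (finite_Iic B).subset (image_subset_iff.2 fun x _ => ?_)
    obtain ⟨k, hk, hkY⟩ := hB x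
    exact (returnTime_le hk.1 (interior_subset hkY)).trans hk.2
  · exact (hYclosed.inter (hYclosed.preimage (h.continuous.iterate ρ))).isCompact
  · rintro _ ⟨y, hy, rfl⟩
    exact hy.2
  · rintro _ ⟨y, -, rfl⟩
    exact setOf_returnTime_eq (fun y _ => hret y) (one_le_returnTime (hret y))

/-- For a minimal homeomorphism of a compact Hausdorff space and closed `Y` with
nonempty interior, the first return time `r_Y` has finite range, the sets
`T_ρ = {y ∈ Y : h^ρ(y) ∈ Y}` are compact, cover `Y`, satisfy `h^ρ(T_ρ) ⊆ Y`, and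
the level sets of `r_Y` are the differences `T_ρ \ ⋃_{ρ' < ρ} T_{ρ'}`. -/
theorem stmt_13 {X : Type*} [TopologicalSpace X] [CompactSpace X] [T2Space X]
    (h : X ≃ₜ X)
    (hmin : ∀ x : X, Dense (Set.range fun n : ℤ => (h.toEquiv ^ n) x))
    (Y : Set X) (hYclosed : IsClosed Y) (hYint : (interior Y).Nonempty)
    (rY : X → ℕ) (hrY : ∀ x, rY x = sInf {n : ℕ | 1 ≤ n ∧ (⇑h)^[n] x ∈ Y}) :
    (rY '' Y).Finite ∧
      (∀ ρ ∈ rY '' Y, IsCompact {y ∈ Y | (⇑h)^[ρ] y ∈ Y}) ∧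
      (⋃ ρ ∈ rY '' Y, {y ∈ Y | (⇑h)^[ρ] y ∈ Y}) = Y ∧
      (∀ ρ ∈ rY '' Y, (⇑h)^[ρ] '' {y ∈ Y | (⇑h)^[ρ] y ∈ Y} ⊆ Y) ∧
      (∀ ρ ∈ rY '' Y, {y ∈ Y | rY y = ρ}
        = {y ∈ Y | (⇑h)^[ρ] y ∈ Y} \
            ⋃ ρ' ∈ rY '' Y, ⋃ _ : ρ' < ρ, {y ∈ Y | (⇑h)^[ρ'] y ∈ Y}) :=
  stmt_13_general h hmin Y hYclosed hYint rY hrY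
end

section
/- Let K be a compact metric space, X an infinite compact metric space, and h : X → X a minimal homeomorphism. Fix z ∈ X. For m ≠ n in ℤ, the set S_{m,n} = { f ∈ C(X, K) : f(h^m(z)) ≠ f(h^n(z)) } is open and, when K = [0,1]^d with d ≥ 1, dense in C(X, K) with the uniform metric. Consequently, for K = [0,1]^d there exists f ∈ C(X,K) such that the coordinates of I_f(z), i.e. the points f(h^k(z)) for k ∈ ℤ, are pairwise distinct. -/
/-!
A periodic point of `h` would have a finite, hence closed, orbit, which by minimality is all of
the infinite space `X`; so the orbit points `h^k z` are pairwise distinct. Evaluation at two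
points is continuous, so `f (h^m z) ≠ f (h^n z)` is an open condition. It is also dense: if
`f (h^m z) = f (h^n z)`, pushing `f` towards a point `q ≠ f (h^n z)` of the convex cube by
`t u`, with `u` an Urysohn function vanishing at `h^m z` and equal to `1` at `h^n z`, gives maps
arbitrarily close to `f` that separate the two points. Baire's theorem in the complete space
`C(X, [0,1]^d)` then intersects these countably many open dense sets.
-/

open Set Function unitInterval

theorem Function.Periodic.finite_range_int {α : Type*} {f : ℤ → α} {p : ℤ}
    (hf : Periodic f p) (hp : p ≠ 0) : (range f).Finite := by
  refine ((finite_Ico 0 |p|).image f).subset ?_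
  rintro - ⟨k, rfl⟩
  refine ⟨k % p, ⟨Int.emod_nonneg k hp, Int.emod_lt_abs k hp⟩, ?_⟩
  rw [Int.emod_def, mul_comm]
  exact hf.sub_int_mul_eq _

theorem Equiv.Perm.injective_zpow_apply_of_dense {X : Type*} [TopologicalSpace X] [T1Space X]
    [Infinite X] (e : Perm X) {x : X} (hx : Dense (range fun n : ℤ => (e ^ n) x)) :
    Injective fun n : ℤ => (e ^ n) x := by
  intro m n (hmn : (e ^ m) x = (e ^ n) x)
  by_contra hne
  have hper : Periodic (fun k : ℤ => (e ^ k) x) (m - n) := fun k => by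
    show (e ^ (k + (m - n))) x = (e ^ k) x
    rw [show k + (m - n) = k - n + m by ring, zpow_add, Perm.mul_apply, hmn,
      ← Perm.mul_apply, ← zpow_add, sub_add_cancel]
  have hfin := hper.finite_range_int (sub_ne_zero.2 hne)
  exact infinite_univ (hx.closure_eq ▸ hfin.isClosed.closure_eq ▸ hfin)

namespace ContinuousMap

variable {X Y : Type*} [TopologicalSpace X] [TopologicalSpace Y]

theorem isOpen_setOf_apply_ne [T2Space Y] (a b : X) : IsOpen {f : C(X, Y) | f a ≠ f b} :=
  isOpen_ne_fun (continuous_eval_const a) (continuous_eval_const b)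

theorem dense_setOf_apply_ne_of_convex [CompletelyRegularSpace X] [T1Space X]
    {E : Type*} [AddCommGroup E] [Module ℝ E] [TopologicalSpace E] [IsTopologicalAddGroup E]
    [ContinuousSMul ℝ E] {s : Set E} (hs : Convex ℝ s) (hs' : s.Nontrivial) {a b : X}
    (hab : a ≠ b) : Dense {f : C(X, s) | f a ≠ f b} := by
  intro f
  rcases ne_or_eq (f a) (f b) with hf | hf
  · exact subset_closure hf
  obtain ⟨u, hu, hua, hu1⟩ := CompletelyRegularSpace.completely_regular a {b}
    isClosed_singleton hab
  obtain ⟨q, hq, hqb⟩ := hs'.exists_ne (f b)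
  let γ : C(I, C(X, s)) := ContinuousMap.curry
    { toFun := fun p => ⟨AffineMap.lineMap (f p.2 : E) q ((p.1 * u p.2 : I) : ℝ),
        hs.lineMap_mem (f p.2).2 hq (p.1 * u p.2).2⟩
      continuous_toFun := by
        refine Continuous.subtype_mk ?_ _
        fun_prop }
  have hγ0 : γ 0 = f := by ext x; simp [γ]
  have hγS : γ '' {0}ᶜ ⊆ {f : C(X, s) | f a ≠ f b} := by
    rintro - ⟨t, ht : t ≠ 0, rfl⟩
    have hub : u b = 1 := hu1 rfl
    simp [γ, hua, hub, hf, Subtype.ext_iff, eq_comm (a := ((f b : s) : E)),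
      AffineMap.lineMap_eq_left_iff, hqb, ht]
  rw [← hγ0]
  exact closure_mono hγS (mem_closure_image γ.continuous.continuousAt
    (by rw [closure_compl_singleton]; trivial))

theorem dense_setOf_apply_ne_of_homeomorph {Z : Type*} [TopologicalSpace Z] (e : Y ≃ₜ Z)
    {a b : X} (hY : Dense {f : C(X, Y) | f a ≠ f b}) : Dense {f : C(X, Z) | f a ≠ f b} := by
  have hsurj : Surjective (ContinuousMap.comp (e : C(Y, Z)) : C(X, Y) → C(X, Z)) := fun g =>
    ⟨(e.symm : C(Z, Y)).comp g, by ext; simp⟩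
  refine (hsurj.denseRange.dense_image (continuous_postcomp _) hY).mono ?_
  rintro - ⟨f, hf, rfl⟩
  exact e.injective.ne hf

end ContinuousMap

def Homeomorph.piIcc {ι : Type*} {α : Type*} [Preorder α] [TopologicalSpace α] (a b : ι → α) :
    Icc a b ≃ₜ ∀ i, Icc (a i) (b i) where
  toFun x i := ⟨x.1 i, x.2.1 i, x.2.2 i⟩
  invFun y := ⟨fun i => y i, fun i => (y i).2.1, fun i => (y i).2.2⟩
  continuous_toFun := continuous_pi fun i => (continuous_apply i).comp continuous_subtype_val
    |>.subtype_mk _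
  continuous_invFun := continuous_pi (fun i => continuous_subtype_val.comp (continuous_apply i))
    |>.subtype_mk _

theorem ContinuousMap.dense_setOf_apply_ne_cube {X ι : Type*} [TopologicalSpace X]
    [CompletelyRegularSpace X] [T1Space X] [Nonempty ι] {a b : X} (hab : a ≠ b) :
    Dense {f : C(X, ι → Icc (0 : ℝ) 1) | f a ≠ f b} :=
  dense_setOf_apply_ne_of_homeomorph (Homeomorph.piIcc 0 1)
    (dense_setOf_apply_ne_of_convex (convex_Icc 0 1) ⟨0, by simp, 1, by simp, zero_ne_one⟩ hab)

/-- For a minimal homeomorphism `h` of an infinite compact metric space `X` and a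
point `z`, the sets `S_{m,n} = {f ∈ C(X,K) : f(h^m z) ≠ f(h^n z)}` are open for
any compact metric `K`; for `K = [0,1]^d` (`d ≥ 1`) they are also dense, and
consequently there is `f ∈ C(X, [0,1]^d)` with the points `f(h^k z)`, `k ∈ ℤ`,
pairwise distinct. -/
theorem stmt_16 {X : Type} [MetricSpace X] [CompactSpace X] [Infinite X]
    (h : X ≃ₜ X)
    (hmin : ∀ x : X, Dense (Set.range fun n : ℤ => (h.toEquiv ^ n) x))
    (z : X) (d : ℕ) (hd : 1 ≤ d) :
    (∀ (K : Type) (_ : MetricSpace K), ∀ _ : CompactSpace K, ∀ m n : ℤ, m ≠ n →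
      IsOpen {f : C(X, K) | f ((h.toEquiv ^ m) z) ≠ f ((h.toEquiv ^ n) z)}) ∧
    (∀ m n : ℤ, m ≠ n →
      Dense {f : C(X, Fin d → Set.Icc (0 : ℝ) 1) |
        f ((h.toEquiv ^ m) z) ≠ f ((h.toEquiv ^ n) z)}) ∧
    ∃ f : C(X, Fin d → Set.Icc (0 : ℝ) 1), ∀ m n : ℤ, m ≠ n →
      f ((h.toEquiv ^ m) z) ≠ f ((h.toEquiv ^ n) z) := by
  have : Nonempty (Fin d) := ⟨⟨0, hd⟩⟩
  have hinj := Equiv.Perm.injective_zpow_apply_of_dense h.toEquiv (hmin z)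
  have hdense : ∀ m n : ℤ, m ≠ n → Dense {f : C(X, Fin d → Set.Icc (0 : ℝ) 1) |
      f ((h.toEquiv ^ m) z) ≠ f ((h.toEquiv ^ n) z)} := fun m n hmn =>
    ContinuousMap.dense_setOf_apply_ne_cube (hinj.ne hmn)
  refine ⟨fun K _ _ m n _ => ContinuousMap.isOpen_setOf_apply_ne _ _, hdense, ?_⟩
  obtain ⟨f, hf⟩ := (dense_iInter_of_isOpen (fun p : {p : ℤ × ℤ // p.1 ≠ p.2} =>
    ContinuousMap.isOpen_setOf_apply_ne _ _) fun p => hdense _ _ p.2).nonempty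
  exact ⟨f, fun m n hmn => mem_iInter.1 hf ⟨(m, n), hmn⟩⟩
end
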